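/- arXiv:2303.07785 — 8 statements merged into one kernel-verified Lean document; each statement's English description precedes it below -/
import Mathlib

section
/- Let λ be a nonzero algebraic number of degree d and let S be a set of field embeddings ℚ(λ) → ℂ. If there is an integer j_0 ≥ 0 such that ∑_{σ ∈ S} σ(λ)^j ∈ ℚ for all j with j_0 ≤ j < j_0 + d, then S is either empty or consists of all d field embeddings of ℚ(λ) into ℂ. -/
open scoped BigOperators

/-- The field `K = ℚ(λ)` realized inside `ℂ`. -/
noncomputable abbrev Qlam (lam : ℂ) : IntermediateField ℚ ℂ := IntermediateField.adjoin ℚ {lam}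

/-- `λ` as an element of `ℚ(λ)`. -/
noncomputable def lamGen (lam : ℂ) : Qlam lam :=
  ⟨lam, IntermediateField.mem_adjoin_simple_self ℚ lam⟩

open Classical in
/-- `Σ_<(y) = ∑ σ(y)`, the sum over all field embeddings `σ : ℚ(λ) → ℂ` with `|σ(λ)| < 1`. -/
noncomputable def SigmaLt (lam : ℂ) (y : Qlam lam) : ℂ :=
  ∑ᶠ σ : (Qlam lam →ₐ[ℚ] ℂ), if ‖σ (lamGen lam)‖ < 1 then σ y else 0

/-- The Galois conjugates of `lam` : the roots in `ℂ` of its minimal polynomial over `ℚ`. -/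
noncomputable def conjugates {A : Type*} [Field A] [Algebra ℚ A] (lam : A) : Multiset ℂ :=
  ((minpoly ℚ lam).map (algebraMap ℚ ℂ)).roots


/-!
Via `σ ↦ σ λ`, the embeddings `ℚ(λ) → ℂ` correspond to the roots of the minimal polynomial `p`
of `λ` in `ℂ`, on which the Galois group of `p` acts transitively. An element `g` of the Galois
group fixes the rational power sums of a set `A` of roots, so `A` and `g • A` have the same power
sums for `deg p` consecutive exponents. The roots being distinct and nonzero, a Vandermonde
argument shows that these power sums determine the set: `A` is Galois stable, hence empty or
everything.
-/

open Polynomial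

theorem eq_zero_of_forall_sum_mul_pow_add_eq_zero {R ι : Type*} [CommRing R] [IsDomain R]
    [Fintype ι] {v c : ι → R} (hv : Function.Injective v) (hv0 : ∀ i, v i ≠ 0) (j0 : ℕ)
    (h : ∀ k < Fintype.card ι, ∑ i, c i * v i ^ (j0 + k) = 0) : c = 0 := by
  let e := (Fintype.equivFin ι).symm
  have hw := Matrix.eq_zero_of_forall_pow_sum_mul_pow_eq_zero (f := v ∘ e)
    (v := fun i => c (e i) * v (e i) ^ j0) (hv.comp e.injective) fun k => by
      rw [← h k k.2, ← e.sum_comp]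
      simp only [Function.comp_apply, pow_add, mul_assoc]
  funext i
  simpa [hv0] using congr_fun hw (e.symm i)

theorem Finset.eq_of_forall_sum_pow_add_eq {R ι : Type*} [CommRing R] [IsDomain R]
    [Fintype ι] {v : ι → R} (hv : Function.Injective v) (hv0 : ∀ i, v i ≠ 0) (j0 : ℕ)
    {A B : Finset ι}
    (h : ∀ k < Fintype.card ι, ∑ i ∈ A, v i ^ (j0 + k) = ∑ i ∈ B, v i ^ (j0 + k)) :
    A = B := by
  classical
  have hc := eq_zero_of_forall_sum_mul_pow_add_eq_zero hv hv0 j0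
    (c := fun i => (if i ∈ A then 1 else 0) - if i ∈ B then 1 else 0) fun k hk => by
      simp only [sub_mul, Finset.sum_sub_distrib, ite_mul, one_mul, zero_mul,
        Finset.sum_ite_mem, Finset.univ_inter, h k hk, sub_self]
  ext i
  have := congr_fun hc i
  by_cases hA : i ∈ A <;> by_cases hB : i ∈ B <;> simp_all

theorem Polynomial.zero_notMem_rootSet {F E : Type*} [Field F] [Field E] [Algebra F E]
    {p : F[X]} (hp0 : p.coeff 0 ≠ 0) : (0 : E) ∉ p.rootSet E := by
  intro hx
  rw [mem_rootSet, ← coeff_zero_eq_aeval_zero', map_eq_zero] at hx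
  exact hp0 hx.2

namespace Polynomial.Gal

variable {F E : Type*} [Field F] [Field E] [Algebra F E] {p : F[X]}
  [Fact ((p.map (algebraMap F E)).Splits)]

theorem coe_eq_algebraMap_rootsEquivRoots_symm (x : p.rootSet E) :
    (x : E) = algebraMap p.SplittingField E ((rootsEquivRoots p E).symm x) :=
  congrArg Subtype.val ((rootsEquivRoots p E).apply_symm_apply x).symm

theorem sum_smul_pow_eq_of_mem_range (ϕ : p.Gal) (A : Finset (p.rootSet E)) (n : ℕ)
    (h : ∑ x ∈ A, (x : E) ^ n ∈ (algebraMap F E).range) :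
    ∑ x ∈ A, ((ϕ • x : p.rootSet E) : E) ^ n = ∑ x ∈ A, (x : E) ^ n := by
  obtain ⟨q, hq⟩ := h
  set y := fun x => ((rootsEquivRoots p E).symm x : p.SplittingField)
  have hy : ∑ x ∈ A, y x ^ n = algebraMap F p.SplittingField q := by
    apply (algebraMap p.SplittingField E).injective
    simp only [map_sum, map_pow, ← IsScalarTower.algebraMap_apply, hq, y,
      ← coe_eq_algebraMap_rootsEquivRoots_symm]
  calc ∑ x ∈ A, ((ϕ • x : p.rootSet E) : E) ^ n =
        algebraMap p.SplittingField E (ϕ (∑ x ∈ A, y x ^ n)) := by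
        simp only [map_sum, map_pow]; rfl
    _ = ∑ x ∈ A, (x : E) ^ n := by
        rw [hy, ← hq, IsScalarTower.algebraMap_apply F p.SplittingField E]
        exact congrArg _ (ϕ.commutes q)

theorem eq_empty_or_eq_univ_of_sum_pow_mem_range (hp : Irreducible p) (hp0 : p.coeff 0 ≠ 0)
    (A : Finset (p.rootSet E)) (j0 : ℕ)
    (h : ∀ j, j0 ≤ j → j < j0 + p.natDegree → ∑ x ∈ A, (x : E) ^ j ∈ (algebraMap F E).range) :
    A = ∅ ∨ A = Finset.univ := by
  have hinv (ϕ : p.Gal) : A.map (MulAction.toPerm ϕ).toEmbedding = A :=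
    Finset.eq_of_forall_sum_pow_add_eq Subtype.val_injective
      (fun x hx => zero_notMem_rootSet hp0 (hx ▸ x.2)) j0 fun k hk => by
        rw [Finset.sum_map]
        refine sum_smul_pow_eq_of_mem_range ϕ A _ <| h _ (Nat.le_add_right j0 k) ?_
        rw [← Nat.card_eq_fintype_card, Nat.card_coe_set_eq] at hk
        have := p.ncard_rootSet_le E
        omega
  have := galAction_isPretransitive p E hp
  refine A.eq_empty_or_nonempty.imp id fun ⟨x, hx⟩ => Finset.eq_univ_of_forall fun y => ?_
  obtain ⟨ϕ, rfl⟩ := MulAction.exists_smul_eq p.Gal x y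
  rw [← hinv ϕ]
  exact Finset.mem_map_of_mem _ hx

end Polynomial.Gal

namespace IntermediateField

variable {F K : Type*} [Field F] [Field K] [Algebra F K] {α : K}

noncomputable def algHomAdjoinIntegralEquivRootSet (L : Type*) [Field L] [Algebra F L]
    (h : IsIntegral F α) : (F⟮α⟯ →ₐ[F] L) ≃ (minpoly F α).rootSet L :=
  (algHomAdjoinIntegralEquiv F h).trans <| Equiv.subtypeEquivRight fun _ =>
    mem_aroots'.trans mem_rootSet'.symm

theorem coe_algHomAdjoinIntegralEquivRootSet {L : Type*} [Field L] [Algebra F L]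
    (h : IsIntegral F α) (σ : F⟮α⟯ →ₐ[F] L) :
    (algHomAdjoinIntegralEquivRootSet L h σ : L) = σ (AdjoinSimple.gen F α) := by
  conv_rhs => rw [← (algHomAdjoinIntegralEquiv F h).symm_apply_apply σ]
  exact (algHomAdjoinIntegralEquiv_symm_apply_gen F h _).symm

end IntermediateField

/-- Let `lam` be a nonzero algebraic number of degree `d` and `S` a set of
field embeddings `ℚ(lam) → ℂ`. If `∑_{σ ∈ S} σ(lam)^j ∈ ℚ` for `d` consecutive values of
`j`, then `S` is empty or consists of all the embeddings. -/
theorem set_of_embeddings_empty_or_univ_of_powerSums_rational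
    (lam : ℂ) (halg : IsAlgebraic ℚ lam) (hne : lam ≠ 0)
    (S : Set (Qlam lam →ₐ[ℚ] ℂ)) (j0 : ℕ)
    (hS : ∀ j : ℕ, j0 ≤ j → j < j0 + (minpoly ℚ lam).natDegree →
      ∃ q : ℚ, (∑ᶠ σ ∈ S, (σ (lamGen lam)) ^ j) = (q : ℂ)) :
    S = ∅ ∨ S = Set.univ := by
  have hint : IsIntegral ℚ lam := halg.isIntegral
  have : FiniteDimensional ℚ (Qlam lam) := IntermediateField.adjoin.finiteDimensional hint
  have : Fact (((minpoly ℚ lam).map (algebraMap ℚ ℂ)).Splits) := ⟨IsAlgClosed.splits _⟩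
  let e : (Qlam lam →ₐ[ℚ] ℂ) ≃ (minpoly ℚ lam).rootSet ℂ :=
    IntermediateField.algHomAdjoinIntegralEquivRootSet ℂ hint
  have he (σ : Qlam lam →ₐ[ℚ] ℂ) : (e σ : ℂ) = σ (lamGen lam) :=
    IntermediateField.coe_algHomAdjoinIntegralEquivRootSet hint σ
  let A := S.toFinite.toFinset.map e.toEmbedding
  have hA (j : ℕ) (h1 : j0 ≤ j) (h2 : j < j0 + (minpoly ℚ lam).natDegree) :
      ∑ x ∈ A, (x : ℂ) ^ j ∈ (algebraMap ℚ ℂ).range := by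
    obtain ⟨q, hq⟩ := hS j h1 h2
    refine ⟨q, (eq_ratCast _ q).trans ?_⟩
    rw [← hq, finsum_mem_eq_finite_toFinset_sum _ S.toFinite, Finset.sum_map]
    simp only [Equiv.coe_toEmbedding, he]
  refine (Polynomial.Gal.eq_empty_or_eq_univ_of_sum_pow_mem_range (minpoly.irreducible hint)
    (minpoly.coeff_zero_ne_zero hint hne) A j0 hA).imp (fun h => ?_)
    fun h => Set.eq_univ_of_forall fun σ => ?_
  · exact Set.Finite.toFinset_eq_empty.mp (Finset.map_eq_empty.mp h)
  · have hσ : e σ ∈ A := h ▸ Finset.mem_univ _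
    rwa [Finset.mem_map_equiv, e.symm_apply_apply, Set.Finite.mem_toFinset] at hσ
end

section
/- Let λ be an algebraic number of degree d such that the set of field embeddings σ : ℚ(λ) → ℂ with |σ(λ)| < 1 is neither empty nor equal to the set of all embeddings, and let p be a prime. Then there exist a constant c_0 > 0, depending only on λ, and a threshold K_0 such that for every real K ≥ K_0 there are integers v_0, …, v_{d−1} with |v_i| ≤ K for all i such that, setting v := ∑_{i=0}^{d−1} p·v_i·λ^i, one has Σ_<(v λ^k) ∉ ℚ for every integer k with |k| ≤ c_0 K. -/
open scoped BigOperators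

/-!
The map `y ↦ Σ_<(y)` is `ℚ`-linear on `ℚ(λ)`, and it does not take only rational values:
otherwise it would be `y ↦ Tr(b y) = ∑_σ σ(b) σ(y)` for some `b` (the trace form is
nondegenerate), and Dedekind's independence of characters would force `σ(b) = 1` when
`|σ(λ)| < 1` and `σ(b) = 0` otherwise, which is impossible when both kinds of embeddings exist.
Hence, for each `k`, the coefficient vectors `v ∈ ℚ^d` with `Σ_<(p v λ^k) ∈ ℚ` form a proper
subspace `U_k`, and a proper subspace contains at most `(2N+1)^(d-1)` points of the integer box
`[-N, N]^d`. For `N = ⌊K⌋` there are fewer than `2N + 1` exponents `|k| ≤ K/2`, so some point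
of the box lies in none of the `U_k`.
-/

open Finset

theorem exists_sum_embeddings_notMem_range {F K E : Type*} [Field F] [Field K] [Field E]
    [Algebra F K] [Algebra F E] [FiniteDimensional F K] [Algebra.IsSeparable F K] [IsAlgClosed E]
    {S : Finset (K →ₐ[F] E)} {σ₁ σ₂ : K →ₐ[F] E} (h₁ : σ₁ ∈ S) (h₂ : σ₂ ∉ S) :
    ∃ y : K, ∑ σ ∈ S, σ y ∉ Set.range (algebraMap F E) := by
  classical
  by_contra! h
  let Λ : K →ₗ[F] E := ∑ σ ∈ S, σ.toLinearMap
  have hΛ : ∀ y, Λ y ∈ LinearMap.range (Algebra.linearMap F E) := by simpa [Λ] using h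
  set f := Λ.codRestrictOfInjective _ (algebraMap F E).injective hΛ
  obtain ⟨b, hb⟩ : ∃ b, ∀ y, Algebra.trace F K (b * y) = f y :=
    ⟨((Algebra.traceForm F K).toDual (traceForm_nondegenerate F K)).symm f,
      LinearMap.BilinForm.apply_toDual_symm_apply (hB := traceForm_nondegenerate F K) f⟩
  have hcoeff : ∑ σ, (σ b - if σ ∈ S then 1 else 0) • σ.toLinearMap = 0 := by
    ext y
    have hy : ∑ σ : K →ₐ[F] E, σ b * σ y = ∑ σ ∈ S, σ y := by
      simp_rw [← map_mul, ← trace_eq_sum_embeddings, hb]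
      exact (Λ.codRestrictOfInjective_comp_apply _ _ hΛ y).trans (by simp [Λ])
    simp [sub_smul, sum_sub_distrib, hy, ite_apply, sum_ite_mem]
  have key := Fintype.linearIndependent_iff.mp (linearIndependent_toLinearMap F K E) _ hcoeff
  have hb0 : b = 0 := by simpa [h₂] using key σ₂
  simpa [h₁, hb0] using key σ₁

theorem Submodule.comap_ne_top_of_surjective {R M M₂ : Type*} [Semiring R] [AddCommMonoid M]
    [AddCommMonoid M₂] [Module R M] [Module R M₂] {f : M →ₗ[R] M₂} (hf : Function.Surjective f)
    {W : Submodule R M₂} (hW : W ≠ ⊤) : W.comap f ≠ ⊤ := fun h =>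
  hW (Submodule.comap_injective_of_surjective hf (h.trans (Submodule.comap_top f).symm))

noncomputable def integerBox (ι : Type*) [Fintype ι] [DecidableEq ι] (N : ℕ) : Finset (ι → ℤ) :=
  Fintype.piFinset fun _ => Icc (-(N : ℤ)) N

section integerBox

variable {ι : Type*} [Fintype ι] [DecidableEq ι]

theorem mem_integerBox {N : ℕ} {v : ι → ℤ} : v ∈ integerBox ι N ↔ ∀ i, |v i| ≤ N := by
  simp [integerBox, abs_le]

/- Pick a functional `g` vanishing on `U` and `j` with `g (e_j) ≠ 0`. A point of `U` is determined
by its coordinates off `j`, so overwriting coordinate `j` by `t ∈ [-N, N]` injects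
`(U ∩ box) × [-N, N]` into the box. -/
open Classical in
theorem card_filter_mem_mul_le_card_integerBox {U : Submodule ℚ (ι → ℚ)} (hU : U ≠ ⊤) (N : ℕ) :
    #{v ∈ integerBox ι N | (fun i => (v i : ℚ)) ∈ U} * (2 * N + 1) ≤ #(integerBox ι N) := by
  obtain ⟨g, hg, hUg⟩ := U.exists_le_ker_of_lt_top hU.lt_top
  obtain ⟨j, hj⟩ : ∃ j, g (Pi.single j 1) ≠ 0 := by
    by_contra! h
    exact hg ((Pi.basisFun ℚ ι).ext fun i => by simpa using h i)
  set bad := {v ∈ integerBox ι N | (fun i => (v i : ℚ)) ∈ U}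
  have hcard : #(bad ×ˢ Icc (-(N : ℤ)) N) = #bad * (2 * N + 1) := by
    rw [card_product, Int.card_Icc]
    congr
    omega
  rw [← hcard]
  refine card_le_card_of_injOn (fun vt => Function.update vt.1 j vt.2) ?_ ?_
  · intro ⟨v, t⟩ hvt
    simp only [coe_product, Set.mem_prod, mem_coe, mem_filter, bad, mem_integerBox, mem_Icc,
      ← abs_le] at hvt ⊢
    intro i
    rcases eq_or_ne i j with rfl | hi
    · simpa using hvt.2
    · simpa [hi] using hvt.1.1 i
  · intro ⟨v, t⟩ hvt ⟨w, s⟩ hws hvw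
    simp only [coe_product, Set.mem_prod, mem_coe, mem_filter, bad] at hvt hws hvw
    have hts : t = s := by simpa using congr_fun hvw j
    have hoff : ∀ i ≠ j, v i = w i := fun i hi => by simpa [hi] using congr_fun hvw i
    have hdiff : (fun i => (v i : ℚ)) - (fun i => (w i : ℚ)) =
        (v j - w j : ℚ) • Pi.single j 1 := by
      ext i
      rcases eq_or_ne i j with rfl | hi
      · simp
      · simp [hi, hoff i hi]
    have hker := hUg (U.sub_mem hvt.1.2 hws.1.2)
    rw [LinearMap.mem_ker, hdiff, map_smul, smul_eq_mul, mul_eq_zero, sub_eq_zero] at hker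
    have hvwj : v j = w j := by exact_mod_cast hker.resolve_right hj
    rw [Prod.mk.injEq, hts]
    exact ⟨funext fun i => by rcases eq_or_ne i j with rfl | hi; exacts [hvwj, hoff i hi], rfl⟩

open Classical in
theorem exists_mem_integerBox_forall_notMem {κ : Type*} {s : Finset κ}
    {U : κ → Submodule ℚ (ι → ℚ)} (hU : ∀ k ∈ s, U k ≠ ⊤) {N : ℕ} (hs : #s < 2 * N + 1) :
    ∃ v ∈ integerBox ι N, ∀ k ∈ s, (fun i => (v i : ℚ)) ∉ U k := by
  by_contra! h
  have hsub : integerBox ι N ⊆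
      s.biUnion fun k => {v ∈ integerBox ι N | (fun i => (v i : ℚ)) ∈ U k} := by
    intro v hv
    obtain ⟨k, hk, hvk⟩ := h v hv
    exact mem_biUnion.mpr ⟨k, hk, mem_filter.mpr ⟨hv, hvk⟩⟩
  have hpos : 0 < #(integerBox ι N) := card_pos.mpr ⟨0, mem_integerBox.mpr fun _ => by simp⟩
  have key : #(integerBox ι N) * (2 * N + 1) ≤ #s * #(integerBox ι N) :=
    calc #(integerBox ι N) * (2 * N + 1)
        ≤ ∑ k ∈ s, #{v ∈ integerBox ι N | (fun i => (v i : ℚ)) ∈ U k} * (2 * N + 1) := by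
          rw [← sum_mul]
          exact Nat.mul_le_mul_right _ ((card_le_card hsub).trans card_biUnion_le)
      _ ≤ ∑ k ∈ s, #(integerBox ι N) :=
          sum_le_sum fun k hk => card_filter_mem_mul_le_card_integerBox (hU k hk) N
      _ = #s * #(integerBox ι N) := by rw [sum_const, smul_eq_mul]
  nlinarith

end integerBox

theorem card_Icc_floor_half_lt {K : ℝ} (hK : 1 ≤ K) :
    #(Icc (-(⌊K / 2⌋₊ : ℤ)) ⌊K / 2⌋₊) < 2 * ⌊K⌋₊ + 1 := by
  have h₁ : (⌊K / 2⌋₊ : ℝ) ≤ K / 2 := Nat.floor_le (by linarith)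
  have h₂ : K < ⌊K⌋₊ + 1 := Nat.lt_floor_add_one K
  have h₃ : (1 : ℝ) ≤ ⌊K⌋₊ := by exact_mod_cast Nat.le_floor (by simpa using hK)
  have : ⌊K / 2⌋₊ < ⌊K⌋₊ := by exact_mod_cast (by linarith : (⌊K / 2⌋₊ : ℝ) < ⌊K⌋₊)
  rw [Int.card_Icc]
  omega

theorem mem_Icc_floor_of_abs_le {x : ℝ} {k : ℤ} (hk : |(k : ℝ)| ≤ x) :
    k ∈ Icc (-(⌊x⌋₊ : ℤ)) ⌊x⌋₊ := by
  have : k.natAbs ≤ ⌊x⌋₊ := Nat.le_floor (by rwa [Nat.cast_natAbs, Int.cast_abs])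
  rw [mem_Icc]
  omega

section Qlam

variable {lam : ℂ}

theorem lamGen_ne_zero (hne : lam ≠ 0) : lamGen lam ≠ 0 :=
  fun h => hne (congrArg Subtype.val h)

noncomputable def scaledPowerCombination (lam : ℂ) (μ : Qlam lam) :
    (Fin (minpoly ℚ lam).natDegree → ℚ) →ₗ[ℚ] Qlam lam :=
  LinearMap.mulLeft ℚ μ ∘ₗ Fintype.linearCombination ℚ fun i => lamGen lam ^ (i : ℕ)

theorem scaledPowerCombination_apply (μ : Qlam lam) (x : Fin (minpoly ℚ lam).natDegree → ℚ) :
    scaledPowerCombination lam μ x = μ * ∑ i, x i • lamGen lam ^ (i : ℕ) := by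
  simp [scaledPowerCombination, Fintype.linearCombination_apply, mul_sum]

theorem scaledPowerCombination_surjective (hint : IsIntegral ℚ lam) {μ : Qlam lam} (hμ : μ ≠ 0) :
    Function.Surjective (scaledPowerCombination lam μ) := by
  set pb := IntermediateField.adjoin.powerBasis hint
  have hbasis : (fun i : Fin (minpoly ℚ lam).natDegree => lamGen lam ^ (i : ℕ)) = pb.basis :=
    funext fun i => (pb.basis_eq_pow i).symm
  have hspan : LinearMap.range (Fintype.linearCombination ℚ
      fun i : Fin (minpoly ℚ lam).natDegree => lamGen lam ^ (i : ℕ)) = ⊤ := by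
    rw [Fintype.range_linearCombination, hbasis]
    exact pb.basis.span_eq
  rw [scaledPowerCombination, LinearMap.coe_comp]
  exact Function.Surjective.comp (fun y => ⟨μ⁻¹ * y, mul_inv_cancel_left₀ hμ y⟩)
    (LinearMap.range_eq_top.mp hspan)

variable (lam) [FiniteDimensional ℚ (Qlam lam)]

noncomputable def sigmaLtLinearMap : Qlam lam →ₗ[ℚ] ℂ :=
  ∑ σ ∈ {σ : Qlam lam →ₐ[ℚ] ℂ | ‖σ (lamGen lam)‖ < 1}, σ.toLinearMap

theorem sigmaLtLinearMap_apply (y : Qlam lam) : sigmaLtLinearMap lam y = SigmaLt lam y := by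
  classical
  rw [SigmaLt, finsum_eq_sum_of_fintype, sigmaLtLinearMap, LinearMap.sum_apply, sum_filter]
  rfl

noncomputable def sigmaLtRat : Submodule ℚ (Qlam lam) :=
  (LinearMap.range (Algebra.linearMap ℚ ℂ)).comap (sigmaLtLinearMap lam)

variable {lam}

theorem mem_sigmaLtRat {y : Qlam lam} : y ∈ sigmaLtRat lam ↔ ∃ q : ℚ, SigmaLt lam y = q := by
  simp [sigmaLtRat, sigmaLtLinearMap_apply, eq_comm]

theorem sigmaLtRat_ne_top (hlt : ∃ σ : Qlam lam →ₐ[ℚ] ℂ, ‖σ (lamGen lam)‖ < 1)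
    (hnotall : ∃ σ : Qlam lam →ₐ[ℚ] ℂ, ¬ ‖σ (lamGen lam)‖ < 1) : sigmaLtRat lam ≠ ⊤ := by
  obtain ⟨σ₁, h₁⟩ := hlt
  obtain ⟨σ₂, h₂⟩ := hnotall
  obtain ⟨y, hy⟩ := exists_sum_embeddings_notMem_range (S := {σ | ‖σ (lamGen lam)‖ < 1})
    (by simpa using h₁) (by simpa using h₂)
  refine fun h => hy ?_
  have : y ∈ sigmaLtRat lam := h ▸ Submodule.mem_top
  simpa [sigmaLtRat, sigmaLtLinearMap, eq_comm] using this

end Qlam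

/-- Let `lam` be algebraic of degree `d` such that the set of embeddings
`σ` with `|σ(lam)| < 1` is neither empty nor everything, and let `p` be a prime. Then
there are `c₀ > 0` (depending only on `lam`) and a threshold `K₀` such that for every
`K ≥ K₀` there are integers `v_0, …, v_{d-1}` with `|v_i| ≤ K` such that, for
`v = ∑ p v_i lam^i`, one has `Σ_<(v lam^k) ∉ ℚ` for every `|k| ≤ c₀ K`. -/
theorem exists_smallVector_sigmaLt_irrational
    (lam : ℂ) (halg : IsAlgebraic ℚ lam) (hne : lam ≠ 0)
    (hlt : ∃ σ : Qlam lam →ₐ[ℚ] ℂ, ‖σ (lamGen lam)‖ < 1)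
    (hnotall : ∃ σ : Qlam lam →ₐ[ℚ] ℂ, ¬ ‖σ (lamGen lam)‖ < 1)
    (p : ℕ) (hp : p.Prime) :
    ∃ c0 : ℝ, 0 < c0 ∧ ∃ K0 : ℝ, ∀ K : ℝ, K0 ≤ K →
      ∃ v : Fin (minpoly ℚ lam).natDegree → ℤ,
        (∀ i, |(v i : ℝ)| ≤ K) ∧
        ∀ k : ℤ, |(k : ℝ)| ≤ c0 * K →
          ¬ ∃ q : ℚ,
            SigmaLt lam
              ((∑ i : Fin (minpoly ℚ lam).natDegree,
                  (p : Qlam lam) * (v i : Qlam lam) * (lamGen lam) ^ (i : ℕ))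
                * (lamGen lam) ^ k) = (q : ℂ) := by
  have hint := halg.isIntegral
  have : FiniteDimensional ℚ (Qlam lam) := IntermediateField.adjoin.finiteDimensional hint
  have hμ (k : ℤ) : (p : Qlam lam) * lamGen lam ^ k ≠ 0 :=
    mul_ne_zero (Nat.cast_ne_zero.mpr hp.ne_zero) (zpow_ne_zero k (lamGen_ne_zero hne))
  have hU (k : ℤ) : (sigmaLtRat lam).comap (scaledPowerCombination lam (p * lamGen lam ^ k)) ≠ ⊤ :=
    Submodule.comap_ne_top_of_surjective (scaledPowerCombination_surjective hint (hμ k))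
      (sigmaLtRat_ne_top hlt hnotall)
  refine ⟨1 / 2, by norm_num, 1, fun K hK => ?_⟩
  obtain ⟨v, hv, hvU⟩ :=
    exists_mem_integerBox_forall_notMem (fun k _ => hU k) (card_Icc_floor_half_lt hK)
  refine ⟨v, fun i => ?_, fun k hk => ?_⟩
  · exact (by exact_mod_cast mem_integerBox.mp hv i : |(v i : ℝ)| ≤ ⌊K⌋₊).trans
      (Nat.floor_le (by linarith))
  · rintro ⟨q, hq⟩
    refine hvU k (mem_Icc_floor_of_abs_le (by linarith)) (mem_sigmaLtRat.mpr ⟨q, Eq.trans ?_ hq⟩)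
    rw [scaledPowerCombination_apply, mul_sum, sum_mul]
    exact congrArg _ (sum_congr rfl fun i _ => by rw [Rat.smul_def]; push_cast; ring)
end

section
/- Let β be an algebraic number of degree d all of whose Galois conjugates have modulus > 1, and let K := ℚ(β). If v ∈ ℝ^{r_1} × ℂ^{r_2} satisfies ⟨v, D(β^j)⟩_< ∈ ℚ for every 0 ≤ j < d, then v lies in the image D(K) of the Minkowski embedding. -/
open NumberField

open Classical in
/-- The bilinear pairing `⟨x, y⟩_< = ∑_real x_w y_w + 2 ∑_complex Re(x_w y_w)` on the
mixed space `ℝ^{r₁} × ℂ^{r₂}` of a number field. -/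
noncomputable def mpair {K : Type*} [Field K] [NumberField K]
    (x y : mixedEmbedding.mixedSpace K) : ℝ :=
  (∑ w : {w : InfinitePlace K // w.IsReal}, x.1 w * y.1 w)
    + 2 * ∑ w : {w : InfinitePlace K // w.IsComplex}, (x.2 w * y.2 w).re

open Classical in
/-- The euclidean norm on the mixed space `ℝ^{r₁} × ℂ^{r₂} ≅ ℝ^d`. -/
noncomputable def mnorm {K : Type*} [Field K] [NumberField K]
    (x : mixedEmbedding.mixedSpace K) : ℝ :=
  Real.sqrt ((∑ w : {w : InfinitePlace K // w.IsReal}, (x.1 w) ^ 2)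
    + ∑ w : {w : InfinitePlace K // w.IsComplex}, ‖x.2 w‖ ^ 2)

/-!
Choose a `ℚ`-basis `b` of `K` (here the powers of `β`) and let `q i ∈ ℚ` be the pairings
`⟨v, D(b i)⟩_<`. Since the trace form of `K/ℚ` is nondegenerate there is `u ∈ K` with
`tr(u b_i) = q i` for all `i`, and `⟨D u, D y⟩_< = tr(u y)`, so `v - D u` pairs to zero with
every `D(b i)`. These span `ℝ^{r₁} × ℂ^{r₂}` over `ℝ`, and `⟨x, (x₁, x̄₂)⟩_< = ‖x‖²`, hence
`v = D u`.
-/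

theorem Algebra.exists_trace_mul_basis_eq {F L ι : Type*} [Field F] [Field L] [Algebra F L]
    [FiniteDimensional F L] [Algebra.IsSeparable F L] (b : Module.Basis ι F L) (q : ι → F) :
    ∃ u : L, ∀ i, Algebra.trace F L (u * b i) = q i := by
  have hB := traceForm_nondegenerate F L
  refine ⟨((traceForm F L).toDual hB).symm (b.constr F q), fun i => ?_⟩
  rw [← traceForm_apply, LinearMap.BilinForm.apply_toDual_symm_apply, b.constr_basis]

namespace NumberField

open InfinitePlace mixedEmbedding

variable {K : Type*} [Field K] [NumberField K]

theorem trace_eq_sum_mult_mul_embedding_re (x : K) :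
    ((Algebra.trace ℚ K x : ℚ) : ℝ) = ∑ w : InfinitePlace K, mult w * (w.embedding x).re := by
  classical
  have hsum : ((Algebra.trace ℚ K x : ℚ) : ℂ) = ∑ σ : K →+* ℂ, σ x := by
    rw [← eq_ratCast (algebraMap ℚ ℂ), trace_eq_sum_embeddings (E := ℂ) (x := x)]
    exact Fintype.sum_equiv (RingHom.equivRatAlgHom K ℂ).symm _ _ fun _ => rfl
  have hre := congrArg Complex.re hsum
  rw [Complex.ratCast_re, Complex.re_sum] at hre
  rw [hre, ← Finset.sum_fiberwise Finset.univ InfinitePlace.mk]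
  refine Finset.sum_congr rfl fun w _ => ?_
  -- `σ` and its conjugate induce the same place and have the same real part.
  have hconst (σ : K →+* ℂ) (hσ : σ ∈ ({σ | InfinitePlace.mk σ = w} : Finset _)) :
      (σ x).re = (w.embedding x).re := by
    rw [← (Finset.mem_filter.mp hσ).2]
    rcases embedding_mk_eq σ with h | h <;>
      simp [h, ComplexEmbedding.conjugate_coe_eq]
  rw [Finset.sum_congr rfl hconst, Finset.sum_const, card_filter_mk_eq, nsmul_eq_mul]

theorem mpair_mixedEmbedding (u y : K) :
    mpair (mixedEmbedding K u) (mixedEmbedding K y) = ((Algebra.trace ℚ K (u * y) : ℚ) : ℝ) := by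
  classical
  rw [trace_eq_sum_mult_mul_embedding_re, sum_eq_sum_add_sum, mpair, Finset.mul_sum]
  congr 1 <;> refine Finset.sum_congr rfl fun w _ => ?_
  · rw [mult_isReal, mixedEmbedding_apply_isReal, mixedEmbedding_apply_isReal, ← map_mul,
      ← embedding_of_isReal_apply w.2, Complex.ofReal_re, Nat.cast_one, one_mul]
  · rw [mult_isComplex, mixedEmbedding_apply_isComplex, mixedEmbedding_apply_isComplex,
      ← map_mul, Nat.cast_ofNat]

variable (K) in
noncomputable def mpairBilin : mixedSpace K →ₗ[ℝ] mixedSpace K →ₗ[ℝ] ℝ :=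
  LinearMap.mk₂ ℝ mpair
    (fun x x' y => by
      simp only [mpair, Prod.fst_add, Prod.snd_add, Pi.add_apply, add_mul, Complex.add_re,
        Finset.sum_add_distrib]
      ring)
    (fun c x y => by
      simp only [mpair, Prod.smul_fst, Prod.smul_snd, Pi.smul_apply, smul_eq_mul,
        Complex.real_smul, mul_assoc, Complex.re_ofReal_mul, ← Finset.mul_sum]
      ring)
    (fun x y y' => by
      simp only [mpair, Prod.fst_add, Prod.snd_add, Pi.add_apply, mul_add, Complex.add_re,
        Finset.sum_add_distrib]
      ring)
    (fun c x y => by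
      simp only [mpair, Prod.smul_fst, Prod.smul_snd, Pi.smul_apply, smul_eq_mul,
        Complex.real_smul, mul_left_comm _ (c : ℂ), mul_left_comm _ c, Complex.re_ofReal_mul,
        ← Finset.mul_sum]
      ring)

@[simp]
theorem mpairBilin_apply (x y : mixedSpace K) : mpairBilin K x y = mpair x y := rfl

open Classical in
theorem mpair_conj_right_self (x : mixedSpace K) :
    mpair x (x.1, fun w => starRingEnd ℂ (x.2 w))
      = ∑ w, x.1 w * x.1 w + 2 * ∑ w, Complex.normSq (x.2 w) := by
  simp only [mpair, Complex.mul_conj, Complex.ofReal_re]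

theorem eq_zero_of_forall_mpair_eq_zero {x : mixedSpace K} (hx : ∀ y, mpair x y = 0) :
    x = 0 := by
  classical
  have hsum := mpair_conj_right_self x
  rw [hx] at hsum
  have hreal : ∀ w ∈ Finset.univ, 0 ≤ x.1 w * x.1 w := fun w _ => mul_self_nonneg _
  have hcomplex : ∀ w ∈ Finset.univ, 0 ≤ Complex.normSq (x.2 w) :=
    fun w _ => Complex.normSq_nonneg _
  have hreal0 := Finset.sum_nonneg hreal
  have hcomplex0 := Finset.sum_nonneg hcomplex
  refine Prod.ext (funext fun w => ?_) (funext fun w => ?_)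
  · exact mul_self_eq_zero.mp <|
      (Finset.sum_eq_zero_iff_of_nonneg hreal).mp (by linarith) w (Finset.mem_univ w)
  · exact Complex.normSq_eq_zero.mp <|
      (Finset.sum_eq_zero_iff_of_nonneg hcomplex).mp (by linarith) w (Finset.mem_univ w)

theorem span_range_mixedEmbedding_basis {ι : Type*} (b : Module.Basis ι ℚ K) :
    Submodule.span ℝ (Set.range (mixedEmbedding K ∘ b)) = ⊤ := by
  let D : K →ₗ[ℚ] mixedSpace K := (mixedEmbedding K).toRatAlgHom.toLinearMap
  have hD : ∀ x, mixedEmbedding K x ∈ Submodule.span ℚ (Set.range (mixedEmbedding K ∘ b)) := by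
    intro x
    rw [Set.range_comp, show (mixedEmbedding K : K → mixedSpace K) = D from rfl,
      Submodule.span_image, b.span_eq]
    exact Submodule.mem_map_of_mem trivial
  rw [eq_top_iff, ← (latticeBasis K).span_eq, Submodule.span_le]
  rintro _ ⟨i, rfl⟩
  rw [latticeBasis_apply]
  exact Submodule.span_le_restrictScalars ℚ ℝ _ (hD _)

theorem mem_range_mixedEmbedding_of_mpair_basis_eq_ratCast {ι : Type*} (b : Module.Basis ι ℚ K)
    {v : mixedSpace K} (hv : ∀ i, ∃ q : ℚ, mpair v (mixedEmbedding K (b i)) = q) :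
    v ∈ Set.range (mixedEmbedding K) := by
  choose q hq using hv
  obtain ⟨u, hu⟩ := Algebra.exists_trace_mul_basis_eq b q
  have hvanish : mpairBilin K (v - mixedEmbedding K u) = 0 := by
    refine LinearMap.ext_on (span_range_mixedEmbedding_basis b) ?_
    rintro _ ⟨i, rfl⟩
    simp [hq, mpair_mixedEmbedding, hu]
  refine ⟨u, (sub_eq_zero.mp (eq_zero_of_forall_mpair_eq_zero fun y => ?_)).symm⟩
  exact LinearMap.congr_fun hvanish y

end NumberField

theorem mem_range_mixedEmbedding_of_pair_rational_general
    (K : Type*) [Field K] [NumberField K] (β : K)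
    (hgen : Algebra.adjoin ℚ ({β} : Set K) = ⊤)
    (v : mixedEmbedding.mixedSpace K)
    (hv : ∀ j : ℕ, j < Module.finrank ℚ K →
      ∃ q : ℚ, mpair v (mixedEmbedding K (β ^ j)) = (q : ℝ)) :
    ∃ u : K, v = mixedEmbedding K u := by
  let pb := PowerBasis.ofAdjoinEqTop (IsIntegral.of_finite ℚ β) hgen
  obtain ⟨u, rfl⟩ : v ∈ Set.range (mixedEmbedding K) :=
    mem_range_mixedEmbedding_of_mpair_basis_eq_ratCast pb.basis fun i => by
      rw [pb.basis_eq_pow, PowerBasis.ofAdjoinEqTop_gen]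
      exact hv i (i.is_lt.trans_eq pb.finrank.symm)
  exact ⟨u, rfl⟩

/-- Let `β` generate the number field `K = ℚ(β)` of degree `d`, with all
Galois conjugates of modulus `> 1`. If `v` in the mixed space satisfies
`⟨v, D(β^j)⟩_< ∈ ℚ` for all `0 ≤ j < d`, then `v` lies in the image of the Minkowski
embedding `D : K → ℝ^{r₁} × ℂ^{r₂}`. -/
theorem mem_range_mixedEmbedding_of_pair_rational
    (K : Type*) [Field K] [NumberField K] (β : K)
    (hgen : Algebra.adjoin ℚ ({β} : Set K) = ⊤)
    (hconj : ∀ σ : K →+* ℂ, 1 < ‖σ β‖)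
    (v : mixedEmbedding.mixedSpace K)
    (hv : ∀ j : ℕ, j < Module.finrank ℚ K →
      ∃ q : ℚ, mpair v (mixedEmbedding K (β ^ j)) = (q : ℝ)) :
    ∃ u : K, v = mixedEmbedding K u :=
  mem_range_mixedEmbedding_of_pair_rational_general K β hgen v hv
end

section
/- Let f(X) = ∑_{j=0}^d a_j X^j ∈ ℤ[X] be irreducible with d ≥ 1 and a_0 ≠ 0, and set r := min{ j : gcd(a_0, a_1, …, a_j) = 1 } (this minimum exists since f, being irreducible, is primitive). For n ≥ 0 let G_n := ℤ[X]/I_n, where I_n := (f, X^n) is the ideal generated by f and X^n. Then G_n has exactly |a_0|^n elements, and as an abelian group G_n is generated by the images of 1, X, …, X^{r−1}. -/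
/-!
Write `a₀ = f(0)`. Reduction modulo `X ^ n` is a surjection
`ℤ[X]/(f, X^(n+1)) → ℤ[X]/(f, X^n)` whose kernel is the image of `c ↦ c X^n`; since `X ∤ f`,
the element `c X^n` dies exactly when `a₀ ∣ c`, so every step multiplies the cardinality by `|a₀|`.

For the generators, the images `μ i` of `X^i` span the quotient, vanish for `i ≥ n` and satisfy
the recurrence `∑ aₖ μ(s + k) = 0` coming from `X^s f = 0`. By induction on `m ≥ r`, the `μ i`
with `i < r` or `i ≥ m` generate; for `m ≥ n` the second family is zero. In the step, modulo the
`μ i` with `i < r` or `i > m` everything is a multiple of `μ m`, and the recurrence at `s = m - j`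
shows by induction on `j` that `a₀, …, a_r` all kill `μ m`; as their gcd is `1`, `μ m` is
redundant.
-/

open Polynomial

theorem Nat.card_eq_card_quotient_ker_mul_of_exact {A B C : Type*} [AddCommGroup A]
    [AddCommGroup B] [AddCommGroup C] {φ : A →+ B} {ψ : B →+ C}
    (hexact : Function.Exact φ ψ) (hψ : Function.Surjective ψ) :
    Nat.card B = Nat.card (A ⧸ φ.ker) * Nat.card C := by
  rw [AddSubgroup.card_eq_card_quotient_mul_card_addSubgroup ψ.ker, mul_comm,
    Nat.card_congr (QuotientAddGroup.quotientKerEquivOfSurjective ψ hψ).toEquiv,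
    hexact.addMonoidHom_ker_eq, Nat.card_congr (QuotientAddGroup.quotientKerEquivRange φ).toEquiv]

namespace Polynomial

variable {R : Type*} [CommRing R]

theorem span_pair_X_pow_succ_le (f : R[X]) (n : ℕ) :
    Ideal.span {f, X ^ (n + 1)} ≤ Ideal.span {f, X ^ n} := by
  rw [Ideal.span_le, Set.insert_subset_iff, Set.singleton_subset_iff]
  exact ⟨Ideal.subset_span (by simp), Ideal.mem_span_pair.2 ⟨0, X, by ring⟩⟩

theorem exists_sub_C_mul_X_pow_mem_span_pair {f p : R[X]} {n : ℕ}
    (hp : p ∈ Ideal.span {f, X ^ n}) :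
    ∃ c : R, p - C c * X ^ n ∈ Ideal.span {f, X ^ (n + 1)} := by
  obtain ⟨u, v, rfl⟩ := Ideal.mem_span_pair.1 hp
  refine ⟨v.coeff 0, Ideal.mem_span_pair.2 ⟨u, v.divX, ?_⟩⟩
  linear_combination X ^ n * X_mul_divX_add v

theorem C_mul_X_pow_mem_span_pair_iff [IsDomain R] {f : R[X]} (hf : f.coeff 0 ≠ 0) (n : ℕ)
    (c : R) : C c * X ^ n ∈ Ideal.span {f, X ^ (n + 1)} ↔ f.coeff 0 ∣ c := by
  constructor
  · intro hc
    obtain ⟨u, v, huv⟩ := Ideal.mem_span_pair.1 hc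
    have hXf : ¬X ∣ f := by rwa [X_dvd_iff]
    obtain ⟨w, rfl⟩ : X ^ n ∣ u := prime_X.pow_dvd_of_dvd_mul_right n hXf
      ⟨C c - v * X, by linear_combination huv⟩
    have hw : w * f + v * X = C c :=
      mul_left_cancel₀ (pow_ne_zero n X_ne_zero) (by linear_combination huv)
    refine ⟨w.coeff 0, ?_⟩
    simpa [mul_comm] using (congrArg (coeff · 0) hw).symm
  · rintro ⟨t, rfl⟩
    refine Ideal.mem_span_pair.2 ⟨C t * X ^ n, -(C t * f.divX), ?_⟩
    rw [C_mul]
    linear_combination -(C t * X ^ n) * X_mul_divX_add f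

theorem card_quotient_span_pair_X_pow_succ [IsDomain R] {f : R[X]} (hf : f.coeff 0 ≠ 0)
    (n : ℕ) :
    Nat.card (R[X] ⧸ Ideal.span {f, X ^ (n + 1)})
      = Nat.card (R ⧸ Ideal.span {f.coeff 0}) * Nat.card (R[X] ⧸ Ideal.span {f, X ^ n}) := by
  have hle := span_pair_X_pow_succ_le f n
  let φ : R →+ R[X] ⧸ Ideal.span {f, X ^ (n + 1)} :=
    AddMonoidHom.mk' (fun c => Ideal.Quotient.mk _ (C c * X ^ n)) fun a b => by
      simp only [add_mul, map_add]
  have hker : φ.ker = (Ideal.span {f.coeff 0}).toAddSubgroup := by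
    ext c
    rw [AddMonoidHom.mem_ker, AddMonoidHom.mk'_apply, Ideal.Quotient.eq_zero_iff_mem,
      C_mul_X_pow_mem_span_pair_iff hf, Submodule.mem_toAddSubgroup, Ideal.mem_span_singleton]
  have hexact : Function.Exact φ (Ideal.Quotient.factor hle).toAddMonoidHom := by
    intro x
    obtain ⟨p, rfl⟩ := Ideal.Quotient.mk_surjective x
    rw [RingHom.toAddMonoidHom_eq_coe, AddMonoidHom.coe_coe, Ideal.Quotient.factor_mk,
      Ideal.Quotient.eq_zero_iff_mem]
    constructor
    · intro hp
      obtain ⟨c, hc⟩ := exists_sub_C_mul_X_pow_mem_span_pair hp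
      exact ⟨c, (Ideal.Quotient.eq.2 hc).symm⟩
    · rintro ⟨c, hc⟩
      refine (Submodule.sub_mem_iff_right _ ?_).1 (hle (Ideal.Quotient.eq.1 hc))
      exact Ideal.mul_mem_left _ _ (Ideal.subset_span (by simp))
  rw [Nat.card_eq_card_quotient_ker_mul_of_exact hexact (Ideal.Quotient.factor_surjective hle),
    hker]
  rfl

theorem card_quotient_span_pair_X_pow [IsDomain R] {f : R[X]} (hf : f.coeff 0 ≠ 0) (n : ℕ) :
    Nat.card (R[X] ⧸ Ideal.span {f, X ^ n}) = Nat.card (R ⧸ Ideal.span {f.coeff 0}) ^ n := by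
  induction n with
  | zero =>
    rw [pow_zero, pow_zero, (Ideal.eq_top_iff_one _).2 (Ideal.subset_span (by simp))]
    exact Nat.card_eq_one_iff_unique.2 ⟨inferInstance, ⟨0⟩⟩
  | succ n ih => rw [card_quotient_span_pair_X_pow_succ hf, ih, pow_succ']

end Polynomial

theorem Finset.gcd_mem_of_forall_mem {ι R : Type*} [CommRing R] [IsPrincipalIdealRing R]
    [NormalizedGCDMonoid R] (I : Ideal R) {s : Finset ι} {g : ι → R}
    (h : ∀ i ∈ s, g i ∈ I) : s.gcd g ∈ I := by
  simp only [Submodule.IsPrincipal.mem_iff_generator_dvd] at h ⊢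
  exact Finset.dvd_gcd h

section Recurrence

variable {G : Type*} [AddCommGroup G] {μ : ℕ → G} {p : ℤ[X]} {r : ℕ}

theorem eq_zero_of_recurrence_of_forall_mem_zmultiples
    (hr : (Finset.range (r + 1)).gcd p.coeff = 1)
    (hrec : ∀ s, ∑ k ∈ p.support, p.coeff k • μ (s + k) = 0) {m : ℕ} (hrm : r ≤ m)
    (hcyclic : ∀ i, μ i ∈ AddSubgroup.zmultiples (μ m)) (hzero : ∀ i, m < i → μ i = 0) :
    μ m = 0 := by
  have hann : ∀ j ≤ r, p.coeff j ∈ Ideal.torsionOf ℤ G (μ m) := by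
    intro j
    induction j using Nat.strong_induction_on with
    | _ j ih =>
      intro hjr
      have hrel := hrec (m - j)
      rw [Finset.sum_eq_single j] at hrel
      · rwa [Ideal.mem_torsionOf_iff, ← Nat.sub_add_cancel (hrm.trans' hjr)]
      · intro k _ hkj
        rcases hkj.lt_or_gt with hkj | hkj
        · obtain ⟨c, hc⟩ := AddSubgroup.mem_zmultiples_iff.1 (hcyclic (m - j + k))
          rw [← hc, smul_comm, (Ideal.mem_torsionOf_iff _ _).1 (ih k hkj (hkj.le.trans hjr)),
            smul_zero]
        · rw [hzero _ (by omega), smul_zero]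
      · intro hj
        rw [notMem_support_iff.1 hj, zero_smul]
  rw [← Ideal.torsionOf_eq_top_iff ℤ, Ideal.eq_top_iff_one, ← hr]
  exact Finset.gcd_mem_of_forall_mem _ fun j hj =>
    hann j (Nat.lt_succ_iff.1 (Finset.mem_range.1 hj))

theorem closure_image_Iio_union_image_Ici_succ_eq_top
    (hr : (Finset.range (r + 1)).gcd p.coeff = 1)
    (hrec : ∀ s, ∑ k ∈ p.support, p.coeff k • μ (s + k) = 0) {m : ℕ} (hrm : r ≤ m)
    (hm : AddSubgroup.closure (μ '' Set.Iio r ∪ μ '' Set.Ici m) = ⊤) :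
    AddSubgroup.closure (μ '' Set.Iio r ∪ μ '' Set.Ici (m + 1)) = ⊤ := by
  set H := AddSubgroup.closure (μ '' Set.Iio r ∪ μ '' Set.Ici (m + 1))
  let π := QuotientAddGroup.mk' H
  have hπ : ∀ i, (i < r ∨ m < i) → π (μ i) = 0 := by
    intro i hi
    refine (QuotientAddGroup.eq_zero_iff _).2 (AddSubgroup.subset_closure ?_)
    exact hi.imp (fun hi => ⟨i, hi, rfl⟩) fun hi => ⟨i, hi, rfl⟩
  have hcyclic : ∀ x, π x ∈ AddSubgroup.zmultiples (π (μ m)) := by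
    suffices ⊤ ≤ (AddSubgroup.zmultiples (π (μ m))).comap π from fun x => this trivial
    rw [← hm, AddSubgroup.closure_le]
    rintro _ (⟨i, hi, rfl⟩ | ⟨i, hi, rfl⟩)
    · simp [hπ i (.inl hi)]
    · rcases (Set.mem_Ici.1 hi).eq_or_lt with rfl | hi
      · exact AddSubgroup.mem_zmultiples _
      · simp [hπ i (.inr hi)]
  have hμm : π (μ m) = 0 := eq_zero_of_recurrence_of_forall_mem_zmultiples (μ := π ∘ μ) hr
    (fun s => by simpa [map_sum] using congrArg π (hrec s)) hrm (fun i => hcyclic (μ i))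
    (fun i hi => hπ i (.inr hi))
  rw [eq_top_iff, ← hm, AddSubgroup.closure_le]
  rintro _ (⟨i, hi, rfl⟩ | ⟨i, hi, rfl⟩)
  · exact AddSubgroup.subset_closure (.inl ⟨i, hi, rfl⟩)
  · rcases (Set.mem_Ici.1 hi).eq_or_lt with rfl | hi
    · exact (QuotientAddGroup.eq_zero_iff _).1 hμm
    · exact AddSubgroup.subset_closure (.inr ⟨i, hi, rfl⟩)

theorem closure_image_Iio_eq_top_of_recurrence
    (hr : (Finset.range (r + 1)).gcd p.coeff = 1)
    (hrec : ∀ s, ∑ k ∈ p.support, p.coeff k • μ (s + k) = 0)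
    (hgen : AddSubgroup.closure (Set.range μ) = ⊤) {n : ℕ} (hzero : ∀ i, n ≤ i → μ i = 0) :
    AddSubgroup.closure (μ '' Set.Iio r) = ⊤ := by
  have htop : ∀ m, r ≤ m → AddSubgroup.closure (μ '' Set.Iio r ∪ μ '' Set.Ici m) = ⊤ := by
    intro m hm
    induction m, hm using Nat.le_induction with
    | base => rwa [← Set.image_union, Set.Iio_union_Ici, Set.image_univ]
    | succ m hm ih => exact closure_image_Iio_union_image_Ici_succ_eq_top hr hrec hm ih
  have hbot : AddSubgroup.closure (μ '' Set.Ici (max r n)) = ⊥ := by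
    rw [AddSubgroup.closure_eq_bot_iff]
    rintro _ ⟨i, hi, rfl⟩
    exact hzero i (le_of_max_le_right hi)
  rw [← htop (max r n) (le_max_left r n), AddSubgroup.closure_union, hbot, sup_bot_eq]

end Recurrence

namespace Polynomial

theorem closure_range_X_pow_eq_top :
    AddSubgroup.closure (Set.range fun i : ℕ => (X : ℤ[X]) ^ i) = ⊤ := by
  rw [eq_top_iff]
  rintro p -
  induction p using Polynomial.induction_on' with
  | add p q hp hq => exact add_mem hp hq
  | monomial k c =>
    rw [← smul_X_eq_monomial]
    exact AddSubgroup.zsmul_mem _ (AddSubgroup.subset_closure (Set.mem_range_self k)) c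

theorem closure_range_mk_X_pow_eq_top (I : Ideal ℤ[X]) :
    AddSubgroup.closure (Set.range fun i : ℕ => Ideal.Quotient.mk I (X ^ i)) = ⊤ := by
  have h := AddMonoidHom.map_closure (Ideal.Quotient.mk I).toAddMonoidHom (Set.range (X ^ ·))
  rw [closure_range_X_pow_eq_top, ← Set.range_comp,
    AddSubgroup.map_top_of_surjective _ Ideal.Quotient.mk_surjective] at h
  exact h.symm

theorem sum_coeff_smul_mk_X_pow_add_eq_zero {f : ℤ[X]} {I : Ideal ℤ[X]} (hf : f ∈ I) (s : ℕ) :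
    ∑ k ∈ f.support, f.coeff k • Ideal.Quotient.mk I (X ^ (s + k)) = 0 := by
  have h := Ideal.Quotient.eq_zero_iff_mem.2 (I.mul_mem_left (X ^ s) hf)
  conv_lhs at h => rw [as_sum_support f, Finset.mul_sum]
  simpa [map_sum, ← smul_X_eq_monomial, pow_add, mul_left_comm] using h

theorem gcd_range_coeff_eq_one {f : ℤ[X]} (hirr : Irreducible f) (hd : f.natDegree ≠ 0) :
    (Finset.range (f.natDegree + 1)).gcd f.coeff = 1 := by
  rw [← content_eq_gcd_range_of_lt f _ (Nat.lt_succ_self _)]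
  exact isPrimitive_iff_content_eq_one.1 (hirr.isPrimitive hd)

end Polynomial

/-- Let `f = ∑ a_j X^j ∈ ℤ[X]` be irreducible with `d ≥ 1`, `a_0 ≠ 0`,
and let `r` be minimal with `gcd(a_0, …, a_r) = 1`. Then `G_n = ℤ[X]/(f, X^n)` has
exactly `|a_0|^n` elements and is generated, as an abelian group, by the images of
`1, X, …, X^{r-1}`. -/
theorem card_and_generators_of_quotient_by_f_and_Xpow
    (f : Polynomial ℤ) (hirr : Irreducible f) (hd : 1 ≤ f.natDegree)
    (ha0 : f.coeff 0 ≠ 0) (n : ℕ) :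
    Nat.card (Polynomial ℤ ⧸ (Ideal.span {f, Polynomial.X ^ n} : Ideal (Polynomial ℤ)))
        = (f.coeff 0).natAbs ^ n
    ∧ AddSubgroup.closure
        ((fun i : ℕ =>
            Ideal.Quotient.mk (Ideal.span {f, Polynomial.X ^ n} : Ideal (Polynomial ℤ))
              (Polynomial.X ^ i)) ''
          Set.Iio (sInf {j : ℕ | (Finset.range (j + 1)).gcd f.coeff = 1})) = ⊤ := by
  have hf : f ∈ Ideal.span {f, X ^ n} := Ideal.subset_span (by simp)
  have hXn : X ^ n ∈ Ideal.span {f, X ^ n} := Ideal.subset_span (by simp)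
  refine ⟨?_, ?_⟩
  · rw [card_quotient_span_pair_X_pow ha0, Nat.card_congr (Int.quotientSpanEquivZMod _).toEquiv,
      Nat.card_zmod]
  · have hr := Nat.sInf_mem (s := {j | (Finset.range (j + 1)).gcd f.coeff = 1})
      ⟨f.natDegree, gcd_range_coeff_eq_one hirr (by omega)⟩
    exact closure_image_Iio_eq_top_of_recurrence hr (sum_coeff_smul_mk_X_pow_add_eq_zero hf)
      (closure_range_mk_X_pow_eq_top _) fun i hi =>
        Ideal.Quotient.eq_zero_iff_mem.2 (Ideal.mem_of_dvd _ (pow_dvd_pow X hi) hXn)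
end

section
/- Let β be an algebraic integer of degree d all of whose Galois conjugates have modulus > 1, let λ := β^{-1} and K := ℚ(β). The image D(ℤ[β]) of ℤ[β] under the Minkowski embedding is a lattice in ℝ^{r_1} × ℂ^{r_2} ≅ ℝ^d; let ℤ[β]^* := { x ∈ ℝ^{r_1} × ℂ^{r_2} : ⟨x, D(z)⟩_< ∈ ℤ for all z ∈ ℤ[β] } be its polar lattice with respect to ⟨·,·⟩_<. Then for every ε > 0 there exists η > 0 such that: if v ∈ ℝ^{r_1} × ℂ^{r_2} satisfies |e(⟨v, D(λ^j)⟩_<) − 1| ≤ η for all 0 ≤ j < d, then there exists w ∈ ℤ[β]^* with |v − w| ≤ ε. -/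
/-!
The vectors `D(β⁻¹ ^ j)`, `j < d`, form an `ℝ`-basis of the mixed space, and since `β` is
integral, `ℤ[β]` lies in their `ℤ`-span: `β` times `β⁻¹ ^ (j + 1)` is `β⁻¹ ^ j`, and `β` itself is
an integral combination of the `β⁻¹ ^ j` by the monic minimal polynomial of `β`. In the basis
dual to `(D(β⁻¹ ^ j))_j` under the nondegenerate form `⟨·,·⟩_<`, the coordinates of `v` are the
pairings `t_j = ⟨v, D(β⁻¹ ^ j)⟩_<`; rounding them gives a point `w` of the polar lattice. Since
`4 |t - round t| ≤ |e(t) - 1|`, all `t_j - round t_j` are small, hence so is `v - w`.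
-/

open NumberField

open mixedEmbedding Module Submodule Polynomial

open Real in
theorem four_mul_abs_sub_round_le (t : ℝ) :
    4 * |t - round t| ≤ ‖Complex.exp (-(2 * π * Complex.I) * (t : ℂ)) - 1‖ := by
  set u := t - round t
  have hu : |π * u| ≤ π / 2 := by
    rw [abs_mul, abs_of_pos pi_pos]; nlinarith [abs_sub_round t, pi_pos]
  have hexp : ‖Complex.exp (-(2 * π * Complex.I) * (t : ℂ)) - 1‖ = 2 * |sin (π * u)| := by
    rw [show -(2 * π * Complex.I) * (t : ℂ) = Complex.I * ((-(2 * π * t) : ℝ) : ℂ) by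
      push_cast; ring, Complex.norm_exp_I_mul_ofReal_sub_one, norm_mul, Real.norm_eq_abs,
      show -(2 * π * t) / 2 = -(π * u) - round t * π by ring, sin_sub_int_mul_pi]
    simp
  have hjordan : 2 / π * |π * u| ≤ sin |π * u| := mul_le_sin (abs_nonneg _) hu
  rw [hexp, abs_sin_eq_sin_abs_of_abs_le_pi (hu.trans (by linarith [pi_pos]))]
  rw [abs_mul, abs_of_pos pi_pos] at hjordan ⊢
  field_simp at hjordan
  linarith

section InversePowers

variable {R F : Type*} [CommRing R] [Field F] [Algebra R F]

theorem Polynomial.Monic.natDegree_pos_of_aeval_eq_zero {f : R[X]} (hf : f.Monic) {b : F}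
    (hfb : aeval b f = 0) : 0 < f.natDegree := by
  refine Nat.pos_of_ne_zero fun h => ?_
  rw [hf.natDegree_eq_zero.1 h, map_one] at hfb
  exact one_ne_zero hfb

theorem inv_pow_mem_span_of_lt (b : F) {n j : ℕ} (hj : j < n) :
    b⁻¹ ^ j ∈ span R (Set.range fun i : Fin n => b⁻¹ ^ (i : ℕ)) :=
  subset_span ⟨⟨j, hj⟩, rfl⟩

theorem mem_span_inv_pow_of_aeval_eq_zero {b : F} (hb : b ≠ 0) {f : R[X]} (hf : f.Monic)
    (hfb : aeval b f = 0) : b ∈ span R (Set.range fun i : Fin f.natDegree => b⁻¹ ^ (i : ℕ)) := by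
  obtain ⟨m, hm⟩ := Nat.exists_eq_succ_of_ne_zero (hf.natDegree_pos_of_aeval_eq_zero hfb).ne'
  have hbm : b ^ (m + 1) = -∑ i ∈ Finset.range (m + 1), f.coeff i • b ^ i := by
    rw [aeval_eq_sum_range, Finset.sum_range_succ, hf.coeff_natDegree, one_smul, hm] at hfb
    exact eq_neg_of_add_eq_zero_right hfb
  have hshift : ∀ i ≤ m, b ^ i * b⁻¹ ^ m = b⁻¹ ^ (m - i) := fun i hi => by
    rw [inv_pow_sub₀ hb hi, inv_pow, mul_comm]
  -- multiply `f(b) = 0` by `b⁻¹ ^ (deg f - 1)`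
  have hb_eq : -∑ i ∈ Finset.range (m + 1), f.coeff i • b⁻¹ ^ (m - i) = b := calc
    _ = b ^ (m + 1) * b⁻¹ ^ m := by
      rw [hbm, neg_mul, Finset.sum_mul]
      congr 1
      refine Finset.sum_congr rfl fun i hi => ?_
      rw [smul_mul_assoc, hshift i (Nat.lt_succ_iff.1 (Finset.mem_range.1 hi))]
    _ = b := by rw [pow_succ', mul_assoc, hshift m le_rfl, Nat.sub_self, pow_zero, mul_one]
  have hmem : -∑ i ∈ Finset.range (m + 1), f.coeff i • b⁻¹ ^ (m - i) ∈
      span R (Set.range fun i : Fin f.natDegree => b⁻¹ ^ (i : ℕ)) :=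
    neg_mem (sum_mem fun i _ => smul_mem _ _ (inv_pow_mem_span_of_lt b (by omega)))
  rwa [hb_eq] at hmem

theorem adjoin_le_span_inv_pow {b : F} {f : R[X]} (hf : f.Monic) (hfb : aeval b f = 0) :
    Subalgebra.toSubmodule (Algebra.adjoin R {b}) ≤
      span R (Set.range fun i : Fin f.natDegree => b⁻¹ ^ (i : ℕ)) := by
  set M := span R (Set.range fun i : Fin f.natDegree => b⁻¹ ^ (i : ℕ))
  have hmul : M ≤ M.comap (LinearMap.mulLeft R b) := by
    rcases eq_or_ne b 0 with rfl | hb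
    · intro x _
      simp
    refine span_le.2 ?_
    rintro _ ⟨⟨j, hj⟩, rfl⟩
    show b * b⁻¹ ^ j ∈ M
    cases j with
    | zero => simpa only [pow_zero, mul_one] using mem_span_inv_pow_of_aeval_eq_zero hb hf hfb
    | succ k =>
      rw [pow_succ', ← mul_assoc, mul_inv_cancel₀ hb, one_mul]
      exact inv_pow_mem_span_of_lt b (by omega)
  have hpow : ∀ i : ℕ, b ^ i ∈ M := fun i => by
    induction i with
    | zero =>
      simpa only [pow_zero] using
        inv_pow_mem_span_of_lt (R := R) b (hf.natDegree_pos_of_aeval_eq_zero hfb)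
    | succ i ih => rw [pow_succ']; exact hmul ih
  rw [Algebra.adjoin_eq_span, span_le]
  rintro _ hx
  obtain ⟨i, rfl⟩ := Submonoid.mem_closure_singleton.1 hx
  exact hpow i

end InversePowers

section MixedSpace

variable {K : Type*} [Field K] [NumberField K]

theorem mpair_comm (x y : mixedSpace K) : mpair x y = mpair y x := by
  simp only [mpair, mul_comm]

theorem mpair_add_left (x y z : mixedSpace K) : mpair (x + y) z = mpair x z + mpair y z := by
  simp only [mpair, Prod.fst_add, Prod.snd_add, Pi.add_apply, add_mul, Complex.add_re,
    Finset.sum_add_distrib]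
  ring

theorem mpair_smul_left (r : ℝ) (x y : mixedSpace K) : mpair (r • x) y = r * mpair x y := by
  simp only [mpair, Prod.smul_fst, Prod.smul_snd, Pi.smul_apply, smul_eq_mul, Complex.real_smul,
    mul_assoc, Complex.re_ofReal_mul, ← Finset.mul_sum]
  ring

variable (K) in
noncomputable def mpairForm : LinearMap.BilinForm ℝ (mixedSpace K) :=
  LinearMap.mk₂ ℝ mpair mpair_add_left mpair_smul_left
    (fun x y z => by rw [mpair_comm, mpair_add_left, mpair_comm y, mpair_comm z])
    (fun r x y => by rw [mpair_comm, mpair_smul_left, mpair_comm, smul_eq_mul])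

@[simp]
theorem mpairForm_apply (x y : mixedSpace K) : mpairForm K x y = mpair x y := rfl

open Classical in
theorem mpair_conj_self (x : mixedSpace K) :
    mpair x (x.1, fun w => starRingEnd ℂ (x.2 w)) =
      (∑ w, x.1 w ^ 2) + 2 * ∑ w, ‖x.2 w‖ ^ 2 := by
  simp only [mpair, Complex.mul_conj, Complex.ofReal_re, Complex.normSq_eq_norm_sq, sq]

open Classical in
theorem mpairForm_separatingLeft : (mpairForm K).SeparatingLeft := by
  intro x hx
  have h := mpair_conj_self x
  rw [← mpairForm_apply, hx] at h
  obtain ⟨hre, hcx⟩ := (add_eq_zero_iff_of_nonneg (by positivity) (by positivity)).1 h.symm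
  rw [Finset.sum_eq_zero_iff_of_nonneg fun _ _ => sq_nonneg _] at hre
  rw [mul_eq_zero, Finset.sum_eq_zero_iff_of_nonneg fun _ _ => sq_nonneg _] at hcx
  exact Prod.ext (funext fun w => pow_eq_zero_iff two_ne_zero |>.1 (hre w (Finset.mem_univ w)))
    (funext fun w => by simpa using hcx.resolve_left two_ne_zero w (Finset.mem_univ w))

theorem mpairForm_nondegenerate : (mpairForm K).Nondegenerate :=
  (LinearMap.IsRefl.nondegenerate_iff_separatingLeft fun x y h => by
    rwa [mpairForm_apply, mpair_comm, ← mpairForm_apply] at h).2 mpairForm_separatingLeft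

theorem exists_int_mpair_of_mem_span {ι : Type*} {w : mixedSpace K} {e : ι → K}
    (he : ∀ j, ∃ n : ℤ, mpair w (mixedEmbedding K (e j)) = n) {z : K}
    (hz : z ∈ span ℤ (Set.range e)) : ∃ n : ℤ, mpair w (mixedEmbedding K z) = n := by
  let φ : K →+ ℝ := (mpairForm K w).toAddMonoidHom.comp (mixedEmbedding K).toAddMonoidHom
  have hle : span ℤ (Set.range e) ≤ ((Int.castAddHom ℝ).range.comap φ).toIntSubmodule := by
    refine span_le.2 ?_
    rintro _ ⟨j, rfl⟩
    obtain ⟨n, hn⟩ := he j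
    exact ⟨n, hn.symm⟩
  obtain ⟨n, hn⟩ := hle hz
  exact ⟨n, hn.symm⟩

open Classical in
theorem continuous_mnorm : Continuous (mnorm : mixedSpace K → ℝ) := by
  unfold mnorm
  fun_prop

theorem exists_pos_forall_mnorm_le {ι : Type*} [Fintype ι] (L : (ι → ℝ) →ₗ[ℝ] mixedSpace K)
    {ε : ℝ} (hε : 0 < ε) : ∃ δ > 0, ∀ u : ι → ℝ, (∀ i, |u i| ≤ δ) → mnorm (L u) ≤ ε := by
  have hcont : Continuous fun u => mnorm (L u) :=
    continuous_mnorm.comp (LinearMap.continuous_of_finiteDimensional L)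
  obtain ⟨δ, hδ, hsmall⟩ := Metric.continuousAt_iff.1 hcont.continuousAt ε hε
  refine ⟨δ / 2, half_pos hδ, fun u hu => ?_⟩
  have hu' : dist u 0 < δ := by
    rw [dist_zero_right, pi_norm_lt_iff hδ]
    exact fun i => (hu i).trans_lt (half_lt_self hδ)
  have h0 : mnorm (L 0) = 0 := by simp [mnorm]
  have := hsmall hu'
  rw [h0, Real.dist_0_eq_abs] at this
  exact (le_abs_self _).trans this.le

theorem span_real_mixedEmbedding_eq_top {ι : Type*} {e : ι → K}
    (he : span ℚ (Set.range e) = ⊤) : span ℝ (Set.range (mixedEmbedding K ∘ e)) = ⊤ := by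
  rw [eq_top_iff, ← (latticeBasis K).span_eq, span_le]
  rintro _ ⟨i, rfl⟩
  rw [latticeBasis_apply]
  have hx : (integralBasis K i : K) ∈ span ℚ (Set.range e) := he ▸ mem_top
  have := mem_map_of_mem (f := (mixedEmbedding K).toRatAlgHom.toLinearMap) hx
  rw [map_span, ← Set.range_comp] at this
  exact span_le_restrictScalars ℚ ℝ _ this

end MixedSpace

section Generator

variable {K : Type*} [Field K] [NumberField K] {β : K}

theorem natDegree_minpoly_int_eq_finrank (hint : IsIntegral ℤ β)
    (hgen : Algebra.adjoin ℚ ({β} : Set K) = ⊤) :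
    (minpoly ℤ β).natDegree = finrank ℚ K := by
  have hQ : IsIntegral ℚ β := Algebra.IsIntegral.isIntegral β
  rw [(PowerBasis.ofAdjoinEqTop hQ hgen).finrank, PowerBasis.ofAdjoinEqTop_dim,
    minpoly.isIntegrallyClosed_eq_field_fractions' ℚ hint,
    natDegree_map_eq_of_injective (algebraMap ℤ ℚ).injective_int]

theorem span_rat_inv_pow_eq_top (hint : IsIntegral ℤ β)
    (hgen : Algebra.adjoin ℚ ({β} : Set K) = ⊤) :
    span ℚ (Set.range fun j : Fin (minpoly ℤ β).natDegree => β⁻¹ ^ (j : ℕ)) = ⊤ := by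
  rw [eq_top_iff, ← Algebra.top_toSubmodule, ← hgen, Algebra.adjoin_eq_span, span_le]
  rintro _ hx
  obtain ⟨i, rfl⟩ := Submonoid.mem_closure_singleton.1 hx
  have hpow : β ^ i ∈ Subalgebra.toSubmodule (Algebra.adjoin ℤ {β}) :=
    Subalgebra.pow_mem _ (Algebra.self_mem_adjoin_singleton ℤ β) i
  exact span_le_restrictScalars ℤ ℚ _
    (adjoin_le_span_inv_pow (minpoly.monic hint) (minpoly.aeval ℤ β) hpow)

noncomputable def invPowBasis (hint : IsIntegral ℤ β)
    (hgen : Algebra.adjoin ℚ ({β} : Set K) = ⊤) :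
    Basis (Fin (minpoly ℤ β).natDegree) ℝ (mixedSpace K) :=
  basisOfTopLeSpanOfCardEqFinrank (fun j => mixedEmbedding K (β⁻¹ ^ (j : ℕ)))
    (span_real_mixedEmbedding_eq_top (span_rat_inv_pow_eq_top hint hgen)).ge
    (by rw [Fintype.card_fin, mixedEmbedding.finrank, natDegree_minpoly_int_eq_finrank hint hgen])

@[simp]
theorem invPowBasis_apply (hint : IsIntegral ℤ β) (hgen : Algebra.adjoin ℚ ({β} : Set K) = ⊤)
    (j : Fin (minpoly ℤ β).natDegree) :
    invPowBasis hint hgen j = mixedEmbedding K (β⁻¹ ^ (j : ℕ)) := by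
  simp [invPowBasis]

end Generator

theorem exists_polarLattice_approx_of_char_near_one_general
    (K : Type*) [Field K] [NumberField K] (β : K)
    (hint : IsIntegral ℤ β)
    (hgen : Algebra.adjoin ℚ ({β} : Set K) = ⊤) :
    ∀ ε : ℝ, 0 < ε → ∃ η : ℝ, 0 < η ∧
      ∀ v : mixedEmbedding.mixedSpace K,
        (∀ j : ℕ, j < Module.finrank ℚ K →
          ‖Complex.exp (-(2 * Real.pi * Complex.I) *
              (mpair v (mixedEmbedding K (β⁻¹ ^ j)) : ℂ)) - 1‖ ≤ η) →
        ∃ w : mixedEmbedding.mixedSpace K,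
          (∀ z ∈ Algebra.adjoin ℤ ({β} : Set K),
            ∃ n : ℤ, mpair w (mixedEmbedding K z) = (n : ℝ)) ∧
          mnorm (v - w) ≤ ε := by
  intro ε hε
  set b' := (mpairForm K).dualBasis mpairForm_nondegenerate (invPowBasis hint hgen)
  have hcoord : ∀ x j, b'.equivFun x j = mpair x (mixedEmbedding K (β⁻¹ ^ (j : ℕ))) := by
    simp [b']
  obtain ⟨δ, hδ, hsmall⟩ := exists_pos_forall_mnorm_le b'.equivFun.symm.toLinearMap hε
  refine ⟨4 * δ, by positivity, fun v hv => ?_⟩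
  set t := b'.equivFun v
  refine ⟨b'.equivFun.symm fun j => round (t j), fun z hz => ?_, ?_⟩
  · refine exists_int_mpair_of_mem_span (fun j => ⟨round (t j), ?_⟩)
      (adjoin_le_span_inv_pow (minpoly.monic hint) (minpoly.aeval ℤ β) hz)
    rw [← hcoord, LinearEquiv.apply_symm_apply]
  · have hvw : v - b'.equivFun.symm (fun j => round (t j)) =
        b'.equivFun.symm fun j => t j - round (t j) := by
      rw [show (fun j => t j - round (t j)) = t - fun j => (round (t j) : ℝ) from rfl, map_sub,
        LinearEquiv.symm_apply_apply]
    rw [hvw]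
    refine hsmall _ fun j => ?_
    have hround := four_mul_abs_sub_round_le (t j)
    have hclose := hv j (natDegree_minpoly_int_eq_finrank hint hgen ▸ j.2)
    rw [← hcoord] at hclose
    linarith

/-- Let `β` be an algebraic integer generating `K = ℚ(β)` of degree `d`,
with all Galois conjugates of modulus `> 1`, and `λ = β⁻¹`. For every `ε > 0` there is
`η > 0` such that: if `v` in the mixed space satisfies `|e(⟨v, D(λ^j)⟩_<) − 1| ≤ η` for
all `0 ≤ j < d`, then there is `w` in the polar lattice `ℤ[β]^*` (i.e. with
`⟨w, D(z)⟩_< ∈ ℤ` for all `z ∈ ℤ[β]`) with `|v − w| ≤ ε` in the euclidean norm. -/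
theorem exists_polarLattice_approx_of_char_near_one
    (K : Type*) [Field K] [NumberField K] (β : K)
    (hint : IsIntegral ℤ β)
    (hgen : Algebra.adjoin ℚ ({β} : Set K) = ⊤)
    (hconj : ∀ σ : K →+* ℂ, 1 < ‖σ β‖) :
    ∀ ε : ℝ, 0 < ε → ∃ η : ℝ, 0 < η ∧
      ∀ v : mixedEmbedding.mixedSpace K,
        (∀ j : ℕ, j < Module.finrank ℚ K →
          ‖Complex.exp (-(2 * Real.pi * Complex.I) *
              (mpair v (mixedEmbedding K (β⁻¹ ^ j)) : ℂ)) - 1‖ ≤ η) →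
        ∃ w : mixedEmbedding.mixedSpace K,
          (∀ z ∈ Algebra.adjoin ℤ ({β} : Set K),
            ∃ n : ℤ, mpair w (mixedEmbedding K z) = (n : ℝ)) ∧
          mnorm (v - w) ≤ ε :=
  exists_polarLattice_approx_of_char_near_one_general K β hint hgen
end

section
/- Let μ be a finitely supported probability measure on ℤ whose support is not contained in qℤ + a for any integers q ≥ 2 and a, and let P_μ(z) := ∑_{n∈ℤ} μ({n}) z^n for z on the unit circle of ℂ. Then for every η′ > 0 there exists η > 0 such that every z on the unit circle with |P_μ(z)| ≥ 1 − η satisfies |z − 1| ≤ η′. -/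
/-!
On the unit circle `P_μ(z)` is a convex combination of the unit vectors `z ^ k`, `k ∈ supp μ`.
Since `ℂ` is strictly convex, `|P_μ(z)| = 1` forces all these `z ^ k` to coincide, i.e.
`z ^ (k - a) = 1` on the support; for `z ≠ 1` this puts the support in `qℤ + a` with `q ≥ 2`
the order of `z`. Hence `|P_μ| < 1` on the compact arc `{|z| = 1, |z - 1| ≥ η′}`, and a
continuous function below `1` on a compact set stays below some `1 - η` there.
-/

/-- `μ` is a finitely supported probability measure on `ℤ`. -/
def IsProbZ (μ : ℤ → ℝ) : Prop :=
  (∀ k, 0 ≤ μ k) ∧ (Function.support μ).Finite ∧ ∑ᶠ k, μ k = 1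

/-- The Fourier transform `P_μ(z) = ∑_k μ(k) z^k` of a finitely supported measure on `ℤ`. -/
noncomputable def Pnu (μ : ℤ → ℝ) (z : ℂ) : ℂ := ∑ᶠ k : ℤ, (μ k : ℂ) * z ^ k

open Metric

lemma exists_two_le_eq_mul_add_of_zpow_eq {G : Type*} [Group G] {g : G} (hg : g ≠ 1)
    {s : Set ℤ} {a : ℤ} (h : ∀ k ∈ s, g ^ k = g ^ a) :
    ∃ q : ℤ, 2 ≤ q ∧ ∀ k ∈ s, ∃ t : ℤ, k = q * t + a := by
  have hdvd : ∀ k ∈ s, (orderOf g : ℤ) ∣ k - a := fun k hk =>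
    orderOf_dvd_iff_zpow_eq_one.mpr (by rw [zpow_sub, h k hk, mul_inv_cancel])
  have hne_one : orderOf g ≠ 1 := orderOf_eq_one_iff.not.mpr hg
  rcases Nat.eq_zero_or_pos (orderOf g) with h0 | hpos
  · refine ⟨2, le_rfl, fun k hk => ⟨0, ?_⟩⟩
    have := hdvd k hk
    rw [h0, Nat.cast_zero, zero_dvd_iff] at this
    omega
  · refine ⟨orderOf g, by omega, fun k hk => ?_⟩
    obtain ⟨t, ht⟩ := hdvd k hk
    exact ⟨t, by linarith⟩

lemma Pnu_eq_sum {μ : ℤ → ℝ} {s : Finset ℤ} (hs : Function.support μ ⊆ s) (z : ℂ) :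
    Pnu μ z = ∑ k ∈ s, (μ k : ℂ) * z ^ k :=
  finsum_eq_sum_of_support_subset _ fun k hk => hs fun h => hk (by simp [h])

lemma continuousOn_Pnu {μ : ℤ → ℝ} (hμ : (Function.support μ).Finite) :
    ContinuousOn (Pnu μ) {0}ᶜ := by
  rw [funext (Pnu_eq_sum hμ.coe_toFinset.ge)]
  exact continuousOn_finsetSum _ fun k _ => continuousOn_const.mul (continuousOn_zpow₀ k)

namespace IsProbZ

variable {μ : ℤ → ℝ}

lemma nonneg (hμ : IsProbZ μ) (k : ℤ) : 0 ≤ μ k := hμ.1 k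

lemma finite_support (hμ : IsProbZ μ) : (Function.support μ).Finite := hμ.2.1

lemma finsum_eq_one (hμ : IsProbZ μ) : ∑ᶠ k, μ k = 1 := hμ.2.2

lemma sum_toFinset_eq_one (hμ : IsProbZ μ) : ∑ k ∈ hμ.finite_support.toFinset, μ k = 1 := by
  rw [← hμ.finsum_eq_one,
    finsum_eq_sum_of_support_subset μ hμ.finite_support.coe_toFinset.ge]

lemma exists_ne_zero (hμ : IsProbZ μ) : ∃ a, μ a ≠ 0 := by
  by_contra! h
  simpa [h] using hμ.finsum_eq_one

lemma norm_Pnu_lt_one_of_zpow_ne (hμ : IsProbZ μ) {z : ℂ} (hz : ‖z‖ = 1) {i j : ℤ}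
    (hi : μ i ≠ 0) (hj : μ j ≠ 0) (hij : z ^ i ≠ z ^ j) : ‖Pnu μ z‖ < 1 := by
  rw [Pnu_eq_sum hμ.finite_support.coe_toFinset.ge]
  simp_rw [← Complex.real_smul]
  exact norm_sum_lt_of_strictConvexSpace (fun k _ => hμ.nonneg k) hμ.sum_toFinset_eq_one
    (by simpa) (by simpa) hij hi hj fun k _ => by rw [norm_zpow, hz, one_zpow]

lemma norm_Pnu_lt_one (hμ : IsProbZ μ)
    (hsupp : ¬ ∃ q : ℤ, 2 ≤ q ∧ ∃ a : ℤ, ∀ k : ℤ, μ k ≠ 0 → ∃ t : ℤ, k = q * t + a)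
    {z : ℂ} (hz : ‖z‖ = 1) (hz1 : z ≠ 1) : ‖Pnu μ z‖ < 1 := by
  have hz0 : z ≠ 0 := norm_ne_zero_iff.mp (by rw [hz]; exact one_ne_zero)
  set u := Units.mk0 z hz0
  obtain ⟨a, ha⟩ := hμ.exists_ne_zero
  by_contra! hge
  have hpow : ∀ k ∈ Function.support μ, u ^ k = u ^ a := fun k hk => Units.ext <| by
    by_contra hne
    exact hge.not_gt (hμ.norm_Pnu_lt_one_of_zpow_ne hz hk ha (by simpa [u] using hne))
  obtain ⟨q, hq, hmod⟩ :=
    exists_two_le_eq_mul_add_of_zpow_eq (by simpa [u, Units.ext_iff] using hz1) hpow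
  exact hsupp ⟨q, hq, a, hmod⟩

end IsProbZ

/-- If the support of the finitely supported probability measure `μ` on
`ℤ` is not contained in any `qℤ + a` with `q ≥ 2`, then for every `η′ > 0` there is
`η > 0` such that every `z` on the unit circle with `|P_μ(z)| ≥ 1 − η` satisfies
`|z − 1| ≤ η′`. -/
theorem abs_sub_one_le_of_abs_Pnu_ge
    (μ : ℤ → ℝ) (hμ : IsProbZ μ)
    (hsupp : ¬ ∃ q : ℤ, 2 ≤ q ∧ ∃ a : ℤ, ∀ k : ℤ, μ k ≠ 0 → ∃ t : ℤ, k = q * t + a) :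
    ∀ η' : ℝ, 0 < η' → ∃ η : ℝ, 0 < η ∧
      ∀ z : ℂ, ‖z‖ = 1 → 1 - η ≤ ‖Pnu μ z‖ →
        ‖z - 1‖ ≤ η' := by
  intro η' hη'
  set K : Set ℂ := sphere 0 1 ∩ {z | η' ≤ ‖z - 1‖}
  have hK : IsCompact K :=
    (isCompact_sphere 0 1).inter_right (isClosed_le continuous_const (by fun_prop))
  have hcont : ContinuousOn (fun z => 1 - ‖Pnu μ z‖) K :=
    continuousOn_const.sub <| ((continuousOn_Pnu hμ.finite_support).mono
      fun z hz (h0 : z = 0) => by simpa [h0] using hz.1).norm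
  have hgap : ∀ z ∈ K, 0 < 1 - ‖Pnu μ z‖ := by
    rintro z ⟨hz, hfar⟩
    refine sub_pos.mpr (hμ.norm_Pnu_lt_one hsupp (mem_sphere_zero_iff_norm.mp hz) ?_)
    rintro rfl
    simp only [sub_self, norm_zero, Set.mem_ofPred_eq] at hfar
    linarith
  obtain ⟨c, hc, hcK⟩ := hK.exists_forall_le' hcont hgap
  refine ⟨c / 2, by linarith, fun z hz hPz => ?_⟩
  by_contra! hfar
  have := hcK z ⟨mem_sphere_zero_iff_norm.mpr hz, hfar.le⟩
  linarith
end

section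
/- For every positive integer d there is a constant C, depending only on d, with the following property. Let K_1 ⊆ K_2 ⊆ ℝ^d be lattices, and for a lattice L let L^* := { x ∈ ℝ^d : ⟨x, y⟩ ∈ ℤ for all y ∈ L } denote its dual lattice with respect to the standard scalar product (so K_2^* ⊆ K_1^*). If ε > 0 and every v ∈ K_2 with v ∉ K_1 satisfies |v| ≥ C·ε^{−1}, then K_2^* is ε-dense in K_1^*: for every x ∈ K_1^* there exists y ∈ K_2^* with |x − y| ≤ ε. -/
/-!
With `S = 2 ^ d / ε`, every vector of `K₂` shorter than `S` lies in `K₁` and so pairs integrally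
with `x`. It therefore suffices to show, by induction on the rank `n` of a discrete subgroup `Λ`,
that an `x` pairing integrally with all vectors of `Λ` shorter than `S` lies within
`(2 ^ n - 1) / S` of `Λ^*`. Let `b` be a shortest nonzero vector of `Λ`. It is primitive, so some
`u ∈ Λ^*` has `⟪u, b⟫ = 1`, and subtracting `round ⟪x, b⟫ • u` from `x` leaves a component along
`b` of length at most `1 / (2 S)` (none at all when `‖b‖ < S`, since then `⟪x, b⟫ ∈ ℤ`).
Projecting `Λ` orthogonally to `b` gives a discrete group of smaller rank whose elements lift to
vectors of `Λ` at most twice as long, so the hypothesis holds there for `S / 2`, and the induction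
hypothesis takes care of the component orthogonal to `b`.
-/

open scoped RealInnerProductSpace
open Module Submodule

theorem Module.exists_dual_apply_eq_one {R M : Type*} [CommRing R] [IsPrincipalIdealRing R]
    [AddCommGroup M] [Module R M] [Module.Free R M] [Module.Finite R M] {b : M}
    (hb : ∀ (r : R) (w : M), b = r • w → IsUnit r) : ∃ f : Dual R M, f b = 1 := by
  let β := Free.chooseBasis R M
  let I : Ideal R := LinearMap.range (Dual.eval R M b)
  obtain ⟨f₀, hf₀⟩ : ∃ f₀ : Dual R M, f₀ b = IsPrincipal.generator I :=
    IsPrincipal.generator_mem I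
  -- the generator of `I` divides every coordinate of `b`, so `b` is a multiple of it
  have hdvd : ∀ i, IsPrincipal.generator I ∣ β.repr b i := fun i =>
    (IsPrincipal.mem_iff_generator_dvd I).mp ⟨β.coord i, rfl⟩
  choose q hq using hdvd
  obtain ⟨u, hu⟩ := hb (IsPrincipal.generator I) (∑ i, q i • β i) <| by
    conv_lhs => rw [← β.sum_repr b]
    simp only [Finset.smul_sum, smul_smul, hq]
  exact ⟨(↑u⁻¹ : R) • f₀, by simp [hf₀, ← hu]⟩

theorem Module.Basis.linearIndependent_real_of_discreteTopology {F : Type*}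
    [NormedAddCommGroup F] [NormedSpace ℝ F] [FiniteDimensional ℝ F] {Λ : Submodule ℤ F}
    [DiscreteTopology Λ] {ι : Type*} [Fintype ι] (β : Basis ι ℤ Λ) :
    LinearIndependent ℝ (fun i => (β i : F)) := by
  have hspan : span ℤ (Set.range fun i => (β i : F)) = Λ := by
    rw [show (fun i => (β i : F)) = Λ.subtype ∘ β from rfl, Set.range_comp, span_image,
      β.span_eq, map_subtype_top]
  have : DiscreteTopology (span ℤ (Set.range fun i => (β i : F))) := by rwa [hspan]
  have hli : LinearIndependent ℤ (fun i => (β i : F)) :=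
    β.linearIndependent.map' Λ.subtype (ker_subtype Λ)
  rw [linearIndependent_iff_card_eq_finrank_span] at hli ⊢
  rw [hli, Real.finrank_eq_int_finrank_of_discrete this]

theorem Submodule.exists_forall_norm_le_of_discreteTopology {F : Type*} [NormedAddCommGroup F]
    [ProperSpace F] (Λ : Submodule ℤ F) [DiscreteTopology Λ] (hΛ : Λ ≠ ⊥) :
    ∃ b ∈ Λ, b ≠ 0 ∧ ∀ v ∈ Λ, v ≠ 0 → ‖b‖ ≤ ‖v‖ := by
  obtain ⟨v₀, hv₀, hv₀0⟩ := exists_mem_ne_zero_of_ne_bot hΛ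
  have hclosed : IsClosed (Λ : Set F) := AddSubgroup.isClosed_of_discrete (H := Λ.toAddSubgroup)
  have hfin : (Metric.closedBall 0 ‖v₀‖ ∩ ((Λ : Set F) \ {0})).Finite :=
    (Metric.finite_isBounded_inter_isClosed (isDiscrete_iff_discreteTopology.mpr ‹_›)
      Metric.isBounded_closedBall hclosed).subset (Set.inter_subset_inter_right _ Set.sdiff_subset)
  obtain ⟨b, ⟨hbv₀, hbΛ, hb0⟩, hmin⟩ := Set.exists_min_image _ norm hfin
    ⟨v₀, by simp, hv₀, hv₀0⟩
  refine ⟨b, hbΛ, hb0, fun v hv hv0 => ?_⟩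
  rcases le_total ‖v‖ ‖v₀‖ with h | h
  · exact hmin v ⟨by simpa using h, hv, hv0⟩
  · exact (mem_closedBall_zero_iff.mp hbv₀).trans h

variable {E : Type*} [NormedAddCommGroup E] [InnerProductSpace ℝ E]

theorem Submodule.exists_inner_eq_of_discreteTopology [FiniteDimensional ℝ E]
    (Λ : Submodule ℤ E) [DiscreteTopology Λ] (f : Dual ℤ Λ) :
    ∃ u : E, ∀ v : Λ, ⟪u, (v : E)⟫ = f v := by
  let β := Free.chooseBasis ℤ Λ
  have hli := β.linearIndependent_real_of_discreteTopology
  obtain ⟨φ, hφ⟩ := LinearMap.exists_extend ((Basis.span hli).constr ℝ fun i => (f (β i) : ℝ))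
  refine ⟨(InnerProductSpace.toDual ℝ E).symm φ.toContinuousLinearMap, fun v => ?_⟩
  rw [InnerProductSpace.toDual_symm_apply]
  have : (φ.restrictScalars ℤ) ∘ₗ Λ.subtype = (Algebra.linearMap ℤ ℝ) ∘ₗ f := β.ext fun i => by
    have := congr($hφ (Basis.span hli i))
    rw [LinearMap.comp_apply, Basis.constr_basis, Basis.span_apply] at this
    simpa using this
  exact congr($this v)

noncomputable def Submodule.dualLattice (Λ : Submodule ℤ E) : Submodule ℤ E :=
  LinearMap.BilinForm.dualSubmodule (innerₗ E) Λ

noncomputable def Submodule.projOrthogonal (Λ : Submodule ℤ E) (b : E) : Submodule ℤ E :=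
  Λ.map (((ℝ ∙ b)ᗮ.starProjection : E →ₗ[ℝ] E).restrictScalars ℤ)

namespace Submodule

variable {Λ : Submodule ℤ E} {b : E}

theorem mem_dualLattice {z : E} :
    z ∈ Λ.dualLattice ↔ ∀ v ∈ Λ, ⟪z, v⟫ ∈ (1 : Submodule ℤ ℝ) :=
  LinearMap.BilinForm.mem_dualSubmodule _

theorem mem_dualLattice_iff_exists_intCast {z : E} :
    z ∈ Λ.dualLattice ↔ ∀ v ∈ Λ, ∃ k : ℤ, ⟪z, v⟫ = k := by
  simp [mem_dualLattice, mem_one, eq_comm]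

@[simp]
theorem dualLattice_bot : (⊥ : Submodule ℤ E).dualLattice = ⊤ :=
  eq_top_iff.mpr fun x _ => mem_dualLattice.mpr fun v hv => by simp [(mem_bot ℤ).mp hv]

theorem isUnit_of_eq_zsmul_of_forall_norm_le {w : E} {r : ℤ} (hb0 : b ≠ 0)
    (hmin : ∀ v ∈ Λ, v ≠ 0 → ‖b‖ ≤ ‖v‖) (hw : w ∈ Λ) (hbw : b = r • w) : IsUnit r := by
  have hw0 : w ≠ 0 := by rintro rfl; simp [hbw] at hb0
  have hr0 : r ≠ 0 := by rintro rfl; simp [hbw] at hb0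
  have : |(r : ℝ)| * ‖w‖ ≤ 1 * ‖w‖ := by
    simpa [hbw, norm_zsmul ℝ] using hmin w hw hw0
  have : |r| ≤ 1 := by exact_mod_cast le_of_mul_le_mul_right this (norm_pos_iff.mpr hw0)
  rw [Int.isUnit_iff]
  cases abs_le.mp this
  omega

theorem exists_mem_dualLattice_inner_eq_one [FiniteDimensional ℝ E] [DiscreteTopology Λ]
    (hb : b ∈ Λ) (hb0 : b ≠ 0) (hmin : ∀ v ∈ Λ, v ≠ 0 → ‖b‖ ≤ ‖v‖) :
    ∃ u ∈ Λ.dualLattice, ⟪u, b⟫ = 1 := by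
  obtain ⟨f, hf⟩ := exists_dual_apply_eq_one (b := (⟨b, hb⟩ : Λ)) fun r w hbw =>
    isUnit_of_eq_zsmul_of_forall_norm_le hb0 hmin w.2 congr(($hbw : E))
  obtain ⟨u, hu⟩ := exists_inner_eq_of_discreteTopology Λ f
  exact ⟨u, mem_dualLattice_iff_exists_intCast.mpr fun v hv => ⟨f ⟨v, hv⟩, hu ⟨v, hv⟩⟩,
    by simpa [hf] using hu ⟨b, hb⟩⟩

theorem mem_projOrthogonal {w : E} :
    w ∈ Λ.projOrthogonal b ↔ ∃ v ∈ Λ, (ℝ ∙ b)ᗮ.starProjection v = w := by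
  simp [projOrthogonal]

theorem starProjection_mem_dualLattice {z : E} (hz : z ∈ (Λ.projOrthogonal b).dualLattice) :
    (ℝ ∙ b)ᗮ.starProjection z ∈ Λ.dualLattice :=
  mem_dualLattice.mpr fun v hv => by
    rw [inner_starProjection_left_eq_right]
    exact mem_dualLattice.mp hz _ (mem_projOrthogonal.mpr ⟨v, hv, rfl⟩)

theorem exists_starProjection_eq_norm_le (hb : b ∈ Λ) (hmin : ∀ v ∈ Λ, v ≠ 0 → ‖b‖ ≤ ‖v‖)
    {v : E} (hv : v ∈ Λ) :
    ∃ v' ∈ Λ, (ℝ ∙ b)ᗮ.starProjection v' = (ℝ ∙ b)ᗮ.starProjection v ∧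
      ‖v'‖ ≤ 2 * ‖(ℝ ∙ b)ᗮ.starProjection v‖ := by
  set c := ⟪b, v⟫ / ‖b‖ ^ 2
  set v' := v - round c • b
  have hQ : (ℝ ∙ b).starProjection v' = (c - round c) • b := by
    rw [map_sub, map_zsmul, starProjection_singleton, starProjection_eq_self_iff.mpr
      (mem_span_singleton_self b), sub_smul, ← Int.cast_smul_eq_zsmul ℝ]
    simp [c]
  have hP : (ℝ ∙ b)ᗮ.starProjection v' = (ℝ ∙ b)ᗮ.starProjection v := by
    rw [map_sub, map_zsmul, starProjection_orthogonalComplement_singleton_eq_zero, smul_zero,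
      sub_zero]
  refine ⟨v', sub_mem hv (zsmul_mem hb _), hP, ?_⟩
  have hsplit : ‖v'‖ ≤ ‖b‖ / 2 + ‖(ℝ ∙ b)ᗮ.starProjection v‖ := calc
    ‖v'‖ = ‖(ℝ ∙ b).starProjection v' + (ℝ ∙ b)ᗮ.starProjection v'‖ := by
      rw [starProjection_add_starProjection_orthogonal]
    _ ≤ |c - round c| * ‖b‖ + ‖(ℝ ∙ b)ᗮ.starProjection v‖ := by
      rw [hQ, hP]
      exact (norm_add_le _ _).trans_eq (by rw [norm_smul, Real.norm_eq_abs])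
    _ ≤ ‖b‖ / 2 + ‖(ℝ ∙ b)ᗮ.starProjection v‖ := by
      gcongr
      nlinarith [abs_sub_round c, norm_nonneg b]
  rcases eq_or_ne v' 0 with h0 | h0
  · simp [h0]
  · linarith [hmin v' (sub_mem hv (zsmul_mem hb _)) h0]

theorem discreteTopology_projOrthogonal (hb : b ∈ Λ) (hb0 : b ≠ 0)
    (hmin : ∀ v ∈ Λ, v ≠ 0 → ‖b‖ ≤ ‖v‖) : DiscreteTopology (Λ.projOrthogonal b) := by
  refine DiscreteTopology.of_forall_le_norm (half_pos (norm_pos_iff.mpr hb0)) fun w hw0 => ?_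
  obtain ⟨v, hv, hvw⟩ := mem_projOrthogonal.mp w.2
  obtain ⟨v', hv', hPv', hnorm⟩ := exists_starProjection_eq_norm_le hb hmin hv
  have hv'0 : v' ≠ 0 := by
    rintro rfl
    exact hw0 (Subtype.ext (by simp [← hvw, ← hPv']))
  rw [coe_norm, ← hvw]
  linarith [hmin v' hv' hv'0]

theorem finrank_span_projOrthogonal_lt [FiniteDimensional ℝ E] (hb : b ∈ Λ) (hb0 : b ≠ 0) :
    finrank ℝ (span ℝ (Λ.projOrthogonal b : Set E)) < finrank ℝ (span ℝ (Λ : Set E)) := by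
  have hb' : b ∈ span ℝ (Λ : Set E) := subset_span hb
  have hperp : span ℝ (Λ.projOrthogonal b : Set E) ≤ (ℝ ∙ b)ᗮ := span_le.mpr fun w hw => by
    obtain ⟨v, -, rfl⟩ := mem_projOrthogonal.mp hw
    exact starProjection_apply_mem _ _
  refine finrank_lt_finrank_of_lt (SetLike.lt_iff_le_and_exists.mpr ⟨span_le.mpr fun w hw => ?_,
    b, hb', fun h => hb0 (inner_self_eq_zero.mp
      (mem_orthogonal_singleton_iff_inner_right.mp (hperp h)))⟩)
  obtain ⟨v, hv, rfl⟩ := mem_projOrthogonal.mp hw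
  rw [SetLike.mem_coe, starProjection_orthogonal_val, starProjection_singleton]
  exact sub_mem (subset_span hv) (smul_mem _ _ hb')

theorem norm_starProjection_singleton (b y : E) :
    ‖(ℝ ∙ b).starProjection y‖ = |⟪b, y⟫| / ‖b‖ := by
  rcases eq_or_ne b 0 with rfl | hb
  · simp
  rw [starProjection_singleton, norm_smul, Real.norm_eq_abs, abs_div]
  field_simp
  simp

section ShortVectors

variable {S : ℝ} {y : E}

theorem inner_eq_zero_of_norm_lt (hy : ∀ v ∈ Λ, ‖v‖ < S → ⟪y, v⟫ ∈ (1 : Submodule ℤ ℝ))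
    (hyb : |⟪y, b⟫| ≤ 1 / 2) (hb : b ∈ Λ) (hbS : ‖b‖ < S) : ⟪y, b⟫ = 0 := by
  obtain ⟨k, hk⟩ := mem_one.mp (hy b hb hbS)
  rw [← hk] at hyb ⊢
  have : |k| < 1 := by
    simp only [algebraMap_int_eq, eq_intCast] at hyb
    exact_mod_cast (by linarith : |(k : ℝ)| < 1)
  simp [Int.abs_lt_one_iff.mp this]

theorem norm_starProjection_singleton_le
    (hy : ∀ v ∈ Λ, ‖v‖ < S → ⟪y, v⟫ ∈ (1 : Submodule ℤ ℝ)) (hyb : |⟪y, b⟫| ≤ 1 / 2)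
    (hS : 0 < S) (hb : b ∈ Λ) :
    ‖(ℝ ∙ b).starProjection y‖ ≤ 1 / (2 * S) := by
  rw [norm_starProjection_singleton, real_inner_comm]
  rcases lt_or_ge ‖b‖ S with hbS | hbS
  · rw [inner_eq_zero_of_norm_lt hy hyb hb hbS, abs_zero, zero_div]
    positivity
  · calc |⟪y, b⟫| / ‖b‖ ≤ (1 / 2) / S := div_le_div₀ (by norm_num) hyb hS hbS
      _ = 1 / (2 * S) := by ring

theorem inner_mem_one_of_mem_projOrthogonal
    (hy : ∀ v ∈ Λ, ‖v‖ < S → ⟪y, v⟫ ∈ (1 : Submodule ℤ ℝ)) (hyb : |⟪y, b⟫| ≤ 1 / 2) (hb : b ∈ Λ)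
    (hmin : ∀ v ∈ Λ, v ≠ 0 → ‖b‖ ≤ ‖v‖) {w : E} (hw : w ∈ Λ.projOrthogonal b)
    (hwS : ‖w‖ < S / 2) : ⟪y, w⟫ ∈ (1 : Submodule ℤ ℝ) := by
  obtain ⟨v, hv, rfl⟩ := mem_projOrthogonal.mp hw
  obtain ⟨v', hv', hPv', hnorm⟩ := exists_starProjection_eq_norm_le hb hmin hv
  rcases eq_or_ne v' 0 with rfl | hv'0
  · simp [← hPv']
  have hv'S : ‖v'‖ < S := by linarith
  have hy_perp := inner_eq_zero_of_norm_lt hy hyb hb ((hmin v' hv' hv'0).trans_lt hv'S)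
  rw [← hPv', ← inner_starProjection_left_eq_right, starProjection_eq_self_iff.mpr
    (mem_orthogonal_singleton_iff_inner_left.mpr hy_perp)]
  exact hy v' hv' hv'S

end ShortVectors

theorem exists_mem_dualLattice_norm_sub_le [FiniteDimensional ℝ E] (n : ℕ) (Λ : Submodule ℤ E)
    [DiscreteTopology Λ] (hn : finrank ℝ (span ℝ (Λ : Set E)) ≤ n) {S : ℝ} (hS : 0 < S) (x : E)
    (hx : ∀ v ∈ Λ, ‖v‖ < S → ⟪x, v⟫ ∈ (1 : Submodule ℤ ℝ)) :
    ∃ z ∈ Λ.dualLattice, ‖x - z‖ ≤ (2 ^ n - 1) / S := by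
  induction n generalizing Λ S x with
  | zero =>
    obtain rfl : Λ = ⊥ := eq_bot_iff.mpr fun v hv =>
      (mem_bot ℤ).mpr (span_eq_bot.mp (finrank_eq_zero.mp (Nat.le_zero.mp hn)) v hv)
    exact ⟨x, by simp, by simp⟩
  | succ n ih =>
    rcases eq_or_ne Λ ⊥ with rfl | hΛ
    · exact ⟨x, by simp, by simpa using div_nonneg (sub_nonneg.mpr (one_le_pow₀ one_le_two)) hS.le⟩
    obtain ⟨b, hb, hb0, hmin⟩ := Λ.exists_forall_norm_le_of_discreteTopology hΛ
    obtain ⟨u, hu, hub⟩ := exists_mem_dualLattice_inner_eq_one hb hb0 hmin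
    set u' := (round ⟪x, b⟫ : ℝ) • u
    have hu' : u' ∈ Λ.dualLattice := by
      simpa only [u', Int.cast_smul_eq_zsmul] using zsmul_mem hu _
    set y := x - u'
    have hy : ∀ v ∈ Λ, ‖v‖ < S → ⟪y, v⟫ ∈ (1 : Submodule ℤ ℝ) := fun v hv hvS => by
      rw [inner_sub_left]
      exact sub_mem (hx v hv hvS) (mem_dualLattice.mp hu' v hv)
    have hyb : |⟪y, b⟫| ≤ 1 / 2 := by
      simpa [y, u', inner_sub_left, real_inner_smul_left, hub] using abs_sub_round ⟪x, b⟫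
    have : DiscreteTopology (Λ.projOrthogonal b) := discreteTopology_projOrthogonal hb hb0 hmin
    obtain ⟨z, hz, hyz⟩ := ih (Λ.projOrthogonal b)
      (Nat.lt_succ_iff.mp ((finrank_span_projOrthogonal_lt hb hb0).trans_le hn)) (half_pos hS) y
      fun w hw hwS => inner_mem_one_of_mem_projOrthogonal hy hyb hb hmin hw hwS
    refine ⟨u' + (ℝ ∙ b)ᗮ.starProjection z, add_mem hu' (starProjection_mem_dualLattice hz), ?_⟩
    calc ‖x - (u' + (ℝ ∙ b)ᗮ.starProjection z)‖
        = ‖(ℝ ∙ b)ᗮ.starProjection (y - z) + (ℝ ∙ b).starProjection y‖ := by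
          rw [map_sub, sub_add_eq_add_sub, add_comm ((ℝ ∙ b)ᗮ.starProjection y),
            starProjection_add_starProjection_orthogonal]
          exact congr_arg _ (sub_sub _ _ _).symm
      _ ≤ (2 ^ n - 1) / (S / 2) + 1 / (2 * S) :=
          norm_add_le_of_le ((norm_starProjection_apply_le _ _).trans hyz)
            (norm_starProjection_singleton_le hy hyb hS hb)
      _ ≤ (2 ^ (n + 1) - 1) / S := by
          field_simp
          ring_nf
          linarith

end Submodule

theorem exists_const_dual_lattice_dense_general
    (d : ℕ) :
    ∃ C : ℝ, ∀ K1 K2 : Submodule ℤ (EuclideanSpace ℝ (Fin d)),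
      ∀ (h1 : DiscreteTopology K1) (h2 : DiscreteTopology K2),
      @IsZLattice ℝ _ _ _ _ K1 h1 → @IsZLattice ℝ _ _ _ _ K2 h2 →
      K1 ≤ K2 →
      ∀ ε : ℝ, 0 < ε →
      (∀ v ∈ K2, v ∉ K1 → C * ε⁻¹ ≤ ‖v‖) →
      ∀ x : EuclideanSpace ℝ (Fin d),
        (∀ y ∈ K1, ∃ n : ℤ, ⟪x, y⟫ = (n : ℝ)) →
        ∃ z : EuclideanSpace ℝ (Fin d),
          (∀ y ∈ K2, ∃ n : ℤ, ⟪z, y⟫ = (n : ℝ)) ∧ ‖x - z‖ ≤ ε := by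
  refine ⟨2 ^ d, fun K1 K2 _ _ _ _ _ ε hε hgap x hx => ?_⟩
  have hS : (0 : ℝ) < 2 ^ d * ε⁻¹ := by positivity
  have hrank : finrank ℝ (span ℝ (K2 : Set (EuclideanSpace ℝ (Fin d)))) ≤ d :=
    (Submodule.finrank_le _).trans_eq finrank_euclideanSpace_fin
  obtain ⟨z, hz, hxz⟩ := K2.exists_mem_dualLattice_norm_sub_le d hrank hS x fun v hv hvS => by
    obtain ⟨k, hk⟩ := hx v (by_contra fun hv₁ => (hgap v hv hv₁).not_gt hvS)
    exact Submodule.mem_one.mpr ⟨k, by simp [hk]⟩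
  refine ⟨z, Submodule.mem_dualLattice_iff_exists_intCast.mp hz, hxz.trans ?_⟩
  calc (2 ^ d - 1) / (2 ^ d * ε⁻¹) ≤ 2 ^ d / (2 ^ d * ε⁻¹) := by gcongr; linarith
    _ = ε := by field_simp

/-- For every `d` there is a constant `C = C(d)` such that, for lattices
`K₁ ⊆ K₂ ⊆ ℝ^d` and `ε > 0`, if every `v ∈ K₂ ∖ K₁` has `|v| ≥ C ε⁻¹`, then the dual
lattice `K₂^*` is `ε`-dense in the dual lattice `K₁^*`. -/
theorem exists_const_dual_lattice_dense
    (d : ℕ) (hd : 0 < d) :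
    ∃ C : ℝ, ∀ K1 K2 : Submodule ℤ (EuclideanSpace ℝ (Fin d)),
      ∀ (h1 : DiscreteTopology K1) (h2 : DiscreteTopology K2),
      @IsZLattice ℝ _ _ _ _ K1 h1 → @IsZLattice ℝ _ _ _ _ K2 h2 →
      K1 ≤ K2 →
      ∀ ε : ℝ, 0 < ε →
      (∀ v ∈ K2, v ∉ K1 → C * ε⁻¹ ≤ ‖v‖) →
      ∀ x : EuclideanSpace ℝ (Fin d),
        (∀ y ∈ K1, ∃ n : ℤ, ⟪x, y⟫ = (n : ℝ)) →
        ∃ z : EuclideanSpace ℝ (Fin d),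
          (∀ y ∈ K2, ∃ n : ℤ, ⟪z, y⟫ = (n : ℝ)) ∧ ‖x - z‖ ≤ ε :=
  exists_const_dual_lattice_dense_general d
end

section
/- Let S be a finite set of primes and, for each p ∈ S, let V_p be a finite-dimensional vector space over the p-adic field ℚ_p equipped with its canonical (Hausdorff ℚ_p-module) topology. Let V := ∏_{p∈S} V_p carry the product topology and let H ⊆ V be a closed subgroup of the additive group of V. Then H = ∏_{p∈S} H_p, where H_p is the image of H under the projection V → V_p; equivalently, for every h = (h_p)_{p∈S} ∈ H and every p ∈ S, the element of V that equals h_p in the p-coordinate and 0 in all other coordinates also belongs to H. -/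
/-! Choose integers `n k` that are `≡ 1 mod (p i)^k` and `≡ 0 mod (p j)^k` for `j ≠ i`
(Chinese remainder theorem; the primes are distinct). Then `n k → 1` in `ℚ_[p i]` and
`n k → 0` in every other `ℚ_[p j]`, so `n k • h ∈ H` tends to `Pi.single i (h i)`, which
lies in `H` because `H` is closed. -/

open Filter Topology

theorem exists_dvd_sub_one_and_dvd {R : Type*} [CommRing R] {a b : R} (h : IsCoprime a b) :
    ∃ n, a ∣ n - 1 ∧ b ∣ n := by
  obtain ⟨u, v, huv⟩ := h
  exact ⟨v * b, ⟨-u, by linear_combination huv⟩, dvd_mul_left b v⟩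

theorem exists_int_pow_dvd_sub_one_and_pow_dvd {ι : Type*} [Fintype ι] [DecidableEq ι]
    {p : ι → ℕ} [∀ i, Fact (p i).Prime] (hinj : Function.Injective p) (i : ι) (k : ℕ) :
    ∃ n : ℤ, (p i : ℤ) ^ k ∣ n - 1 ∧ ∀ j ≠ i, (p j : ℤ) ^ k ∣ n := by
  have hcop : IsCoprime ((p i : ℤ) ^ k) (∏ j ∈ Finset.univ.erase i, (p j : ℤ) ^ k) := by
    refine IsCoprime.prod_right fun j hj => IsCoprime.pow ?_
    rw [Nat.isCoprime_iff_coprime, Nat.coprime_primes Fact.out Fact.out]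
    exact fun hij => Finset.ne_of_mem_erase hj (hinj hij).symm
  obtain ⟨n, hn1, hn0⟩ := exists_dvd_sub_one_and_dvd hcop
  exact ⟨n, hn1, fun j hj =>
    (Finset.dvd_prod_of_mem _ (Finset.mem_erase.mpr ⟨hj, Finset.mem_univ j⟩)).trans hn0⟩

theorem Padic.tendsto_intCast_of_pow_dvd_sub (p : ℕ) [Fact p.Prime] {c : ℕ → ℤ} {a : ℤ}
    (h : ∀ k, (p : ℤ) ^ k ∣ c k - a) :
    Tendsto (fun k => (c k : ℚ_[p])) atTop (𝓝 (a : ℚ_[p])) := by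
  rw [tendsto_iff_norm_sub_tendsto_zero]
  have hbound : ∀ k, ‖(c k : ℚ_[p]) - a‖ ≤ (p : ℝ)⁻¹ ^ k := fun k => by
    rw [← Int.cast_sub, inv_pow, ← zpow_natCast, ← zpow_neg]
    exact (Padic.norm_int_le_pow_iff_dvd _ k).mpr (h k)
  refine squeeze_zero (fun _ => norm_nonneg _) hbound
    (tendsto_pow_atTop_nhds_zero_of_lt_one (by positivity) ?_)
  exact inv_lt_one_of_one_lt₀ (by exact_mod_cast (Fact.out : p.Prime).one_lt)

theorem AddSubgroup.single_mem_of_isClosed_of_tendsto_intCast {ι : Type*} [DecidableEq ι]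
    {R : ι → Type*} [∀ i, Ring (R i)] [∀ i, TopologicalSpace (R i)]
    {V : ι → Type*} [∀ i, AddCommGroup (V i)] [∀ i, Module (R i) (V i)]
    [∀ i, TopologicalSpace (V i)] [∀ i, ContinuousSMul (R i) (V i)]
    {H : AddSubgroup (∀ i, V i)} (hH : IsClosed (H : Set (∀ i, V i))) {c : ℕ → ℤ} {i : ι}
    (hc₁ : Tendsto (fun k => (c k : R i)) atTop (𝓝 1))
    (hc₀ : ∀ j ≠ i, Tendsto (fun k => (c k : R j)) atTop (𝓝 0))
    {h : ∀ i, V i} (hh : h ∈ H) : Pi.single i (h i) ∈ H := by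
  have hcoord : ∀ j (r : R j), Tendsto (fun k => (c k : R j)) atTop (𝓝 r) →
      Tendsto (fun k => c k • h j) atTop (𝓝 (r • h j)) := fun j r hr =>
    (hr.smul_const (h j)).congr fun k => Int.cast_smul_eq_zsmul (R j) (c k) (h j)
  have hlim : Tendsto (fun k => c k • h) atTop (𝓝 (Pi.single i (h i))) := by
    refine tendsto_pi_nhds.mpr fun j => ?_
    rcases eq_or_ne j i with rfl | hj
    · simpa using hcoord j 1 hc₁
    · simpa [hj] using hcoord j 0 (hc₀ j hj)
  exact hH.mem_of_tendsto hlim (Eventually.of_forall fun k => H.zsmul_mem hh (c k))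

theorem closed_subgroup_pi_padic_eq_prod_general
    (ι : Type) [Fintype ι] [DecidableEq ι] (p : ι → ℕ) [∀ i, Fact (p i).Prime]
    (hinj : Function.Injective p)
    (V : ι → Type) [∀ i, AddCommGroup (V i)] [∀ i, Module ℚ_[p i] (V i)]
    [∀ i, TopologicalSpace (V i)]
    [∀ i, ContinuousSMul ℚ_[p i] (V i)]
    (H : AddSubgroup (∀ i, V i)) (hH : IsClosed (H : Set (∀ i, V i))) :
    ∀ h ∈ H, ∀ i : ι, Pi.single i (h i) ∈ H := by
  intro h hh i
  choose n hn₁ hn₀ using exists_int_pow_dvd_sub_one_and_pow_dvd hinj i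
  refine AddSubgroup.single_mem_of_isClosed_of_tendsto_intCast (R := fun j => ℚ_[p j]) (c := n) hH
    ?_ (fun j hj => ?_) hh
  · simpa using Padic.tendsto_intCast_of_pow_dvd_sub (p i) (a := 1) hn₁
  · have hn₀' : ∀ k, (p j : ℤ) ^ k ∣ n k - 0 := by simpa using (hn₀ · j hj)
    simpa using Padic.tendsto_intCast_of_pow_dvd_sub (p j) hn₀'

/-- Let `S = {p i}` be a finite set of (distinct) primes and, for each
`i`, let `V i` be a finite-dimensional `ℚ_[p i]`-vector space with its canonical Hausdorff
topological vector space topology. If `H` is a closed subgroup of the additive group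
`∏ i, V i`, then `H` is the product of its projections: for every `h ∈ H` and every
index `i`, the element equal to `h i` in the `i`-th coordinate and `0` elsewhere also
belongs to `H`. -/
theorem closed_subgroup_pi_padic_eq_prod
    (ι : Type) [Fintype ι] [DecidableEq ι] (p : ι → ℕ) [∀ i, Fact (p i).Prime]
    (hinj : Function.Injective p)
    (V : ι → Type) [∀ i, AddCommGroup (V i)] [∀ i, Module ℚ_[p i] (V i)]
    [∀ i, TopologicalSpace (V i)] [∀ i, IsTopologicalAddGroup (V i)]
    [∀ i, ContinuousSMul ℚ_[p i] (V i)] [∀ i, T2Space (V i)]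
    [∀ i, FiniteDimensional ℚ_[p i] (V i)]
    (H : AddSubgroup (∀ i, V i)) (hH : IsClosed (H : Set (∀ i, V i))) :
    ∀ h ∈ H, ∀ i : ι, Pi.single i (h i) ∈ H :=
  closed_subgroup_pi_padic_eq_prod_general ι p hinj V H hH
end
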